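/- arXiv:0908.4565 — 4 statements merged into one kernel-verified Lean document; each statement's English description precedes it below -/
import Mathlib

section
/- For every von Neumann algebra M on a complex Hilbert space H, dec(M) ≤ 𝔠^{gen(M)}, where 𝔠 = 2^{ℵ₀} is the cardinality of the continuum. -/
noncomputable section

open scoped ENNReal

universe u

namespace VNPaper

variable {H : Type u} [NormedAddCommGroup H] [InnerProductSpace ℂ H] [CompleteSpace H]

/-- A subset `S` of (the carrier of) `M` generates `M`: `S ⊆ M` and every von Neumann algebra
on `H` containing `S` contains `M`. -/
def Generates (M : VonNeumannAlgebra H) (S : Set (H →L[ℂ] H)) : Prop :=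
  S ⊆ (M : Set (H →L[ℂ] H)) ∧
    ∀ N : VonNeumannAlgebra H, S ⊆ (N : Set (H →L[ℂ] H)) → (M : Set (H →L[ℂ] H)) ⊆ N

/-- `gen M` : the least nonzero cardinal `κ` such that some subset of `M` of cardinality `≤ κ`
generates `M`. -/
def gen (M : VonNeumannAlgebra H) : Cardinal.{u} :=
  sInf {κ : Cardinal.{u} | κ ≠ 0 ∧ ∃ S : Set (H →L[ℂ] H), Generates M S ∧ Cardinal.mk S ≤ κ}

/-- `M` is singly generated: some single element of `M` generates `M`. -/
def SinglyGenerated (M : VonNeumannAlgebra H) : Prop :=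
  ∃ x : H →L[ℂ] H, Generates M {x}

/-- `p` is a projection (self-adjoint idempotent) belonging to `M`. -/
def IsProjectionIn (M : VonNeumannAlgebra H) (p : H →L[ℂ] H) : Prop :=
  p ∈ M ∧ p * p = p ∧ star p = p

/-- `dec M` : the supremum of the cardinalities of sets of pairwise orthogonal
nonzero projections in `M`. -/
def dec (M : VonNeumannAlgebra H) : Cardinal.{u} :=
  ⨆ P : {P : Set (H →L[ℂ] H) //
      (∀ p ∈ P, IsProjectionIn M p ∧ p ≠ 0) ∧ P.Pairwise fun p q => p * q = 0},
    Cardinal.mk P.1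

/-- The center of `M`: elements of `M` commuting with every element of `M`. -/
def center (M : VonNeumannAlgebra H) : Set (H →L[ℂ] H) :=
  {x | x ∈ M ∧ ∀ y ∈ M, x * y = y * x}

/-- `decZ M` : the decomposability number of the center of `M`. -/
def decZ (M : VonNeumannAlgebra H) : Cardinal.{u} :=
  ⨆ P : {P : Set (H →L[ℂ] H) //
      (∀ p ∈ P, p ∈ center M ∧ p * p = p ∧ star p = p ∧ p ≠ 0) ∧
        P.Pairwise fun p q => p * q = 0},
    Cardinal.mk P.1

/-- `χ_r M` : the least cardinality of a set `ι` such that `M` is isomorphic, as a unital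
ℂ-*-algebra, to some von Neumann algebra acting on `ℓ²(ι)`. -/
def chiR (M : VonNeumannAlgebra H) : Cardinal.{u} :=
  sInf {κ : Cardinal.{u} | ∃ ι : Type u, Cardinal.mk ι = κ ∧
    ∃ N : VonNeumannAlgebra (lp (fun _ : ι => ℂ) 2),
      Nonempty (M.toStarSubalgebra ≃⋆ₐ[ℂ] N.toStarSubalgebra)}

/-- A family of pairwise orthogonal nonzero central projections of `M` summing to `1`
(i.e. the closed linear span of the union of their ranges is all of `H`). -/
def IsCentralPartition (M : VonNeumannAlgebra H) {I : Type u} (e : I → (H →L[ℂ] H)) : Prop :=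
  (∀ i, e i ∈ center M ∧ e i * e i = e i ∧ star (e i) = e i ∧ e i ≠ 0) ∧
    (∀ i j, i ≠ j → e i * e j = 0) ∧
    (Submodule.span ℂ (⋃ i, Set.range (e i))).topologicalClosure = ⊤

/-- The corner `eMe = {eye : y ∈ M}` of `M` at a projection `e`. -/
def corner (M : VonNeumannAlgebra H) (e : H →L[ℂ] H) : Set (H →L[ℂ] H) :=
  {x | ∃ y ∈ M, x = e * y * e}

/-- An isomorphism of the subset `S ⊆ B(H)` (a ℂ-*-algebra with unit `u`) onto the
von Neumann algebra `N`, as unital ℂ-*-algebras. -/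
def CornerIso {K : Type u} [NormedAddCommGroup K] [InnerProductSpace ℂ K] [CompleteSpace K]
    (S : Set (H →L[ℂ] H)) (u : H →L[ℂ] H) (N : VonNeumannAlgebra K) : Prop :=
  ∃ f : (H →L[ℂ] H) → (K →L[ℂ] K),
    Set.BijOn f S (N : Set (K →L[ℂ] K)) ∧ f u = 1 ∧
      (∀ x ∈ S, ∀ y ∈ S, f (x + y) = f x + f y) ∧
      (∀ x ∈ S, ∀ y ∈ S, f (x * y) = f x * f y) ∧
      (∀ (c : ℂ), ∀ x ∈ S, f (c • x) = c • f x) ∧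
      (∀ x ∈ S, f (star x) = star (f x))

/-- `M` is a factor: its center consists exactly of the scalar multiples of the identity. -/
def IsFactor (M : VonNeumannAlgebra H) : Prop :=
  center M = {x : H →L[ℂ] H | ∃ c : ℂ, x = c • (1 : H →L[ℂ] H)}

/-- `τ` is a tracial state on `M` (encoded as a linear functional on `B(H)`, whose behaviour is
only constrained on `M`). -/
def IsTracialState (M : VonNeumannAlgebra H) (τ : (H →L[ℂ] H) →ₗ[ℂ] ℂ) : Prop :=
  τ 1 = 1 ∧
    (∀ x ∈ M, 0 ≤ (τ (star x * x)).re ∧ (τ (star x * x)).im = 0) ∧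
    ∀ x ∈ M, ∀ y ∈ M, τ (x * y) = τ (y * x)

/-- `τ` is normal: completely additive on families of pairwise orthogonal nonzero projections
of `M`, where `q` is the orthogonal projection onto the closed linear span of the ranges. -/
def IsNormalOn (M : VonNeumannAlgebra H) (τ : (H →L[ℂ] H) →ₗ[ℂ] ℂ) : Prop :=
  ∀ (J : Type u) (p : J → (H →L[ℂ] H)),
    (∀ j, IsProjectionIn M (p j) ∧ p j ≠ 0) →
    (Pairwise fun i j => p i * p j = 0) →
    ∀ q : H →L[ℂ] H, IsProjectionIn M q →
      (LinearMap.range (q : H →ₗ[ℂ] H) : Submodule ℂ H) =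
        (Submodule.span ℂ (⋃ j, Set.range (p j))).topologicalClosure →
      HasSum (fun j => τ (p j)) (τ q)

/-- `M` is a II₁ factor: an infinite-dimensional factor admitting a faithful normal
tracial state. -/
def IsII1Factor (M : VonNeumannAlgebra H) : Prop :=
  IsFactor M ∧ ¬ FiniteDimensional ℂ (Submodule.span ℂ (M : Set (H →L[ℂ] H))) ∧
    ∃ τ : (H →L[ℂ] H) →ₗ[ℂ] ℂ, IsTracialState M τ ∧
      (∀ x ∈ M, τ (star x * x) = 0 → x = 0) ∧ IsNormalOn M τ

/-- `dec_e M` : the supremum of the cardinalities of sets of pairwise orthogonal nonzero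
projections `p ∈ M` with `p e = p`. -/
def decCorner (M : VonNeumannAlgebra H) (e : H →L[ℂ] H) : Cardinal.{u} :=
  ⨆ P : {P : Set (H →L[ℂ] H) //
      (∀ p ∈ P, IsProjectionIn M p ∧ p ≠ 0 ∧ p * e = p) ∧ P.Pairwise fun p q => p * q = 0},
    Cardinal.mk P.1

/-- `gen_e M` : the least nonzero cardinal `κ` such that some subset `S` of the corner `eMe`
with `|S| ≤ κ` has the property that `eMe` is contained in every von Neumann algebra on `H`
containing `S ∪ {e}`. -/
def genCorner (M : VonNeumannAlgebra H) (e : H →L[ℂ] H) : Cardinal.{u} :=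
  sInf {κ : Cardinal.{u} | κ ≠ 0 ∧ ∃ S : Set (H →L[ℂ] H), S ⊆ corner M e ∧
    Cardinal.mk S ≤ κ ∧
    ∀ N : VonNeumannAlgebra H, S ∪ {e} ⊆ (N : Set (H →L[ℂ] H)) →
      corner M e ⊆ (N : Set (H →L[ℂ] H))}

/-- `log_𝔠 κ` : the least nonzero cardinal `μ` with `𝔠 ^ μ ≥ κ`. -/
def clog (κ : Cardinal.{u}) : Cardinal.{u} :=
  sInf {μ : Cardinal.{u} | μ ≠ 0 ∧ κ ≤ Cardinal.continuum ^ μ}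


/-- The von Neumann algebra generated by a set. -/
def vnGen (S : Set (H →L[ℂ] H)) : VonNeumannAlgebra H where
  toStarSubalgebra := StarSubalgebra.centralizer ℂ
    ((StarSubalgebra.centralizer ℂ S : StarSubalgebra ℂ (H →L[ℂ] H)) : Set (H →L[ℂ] H))
  centralizer_centralizer' := by
    have h := StarSubalgebra.coe_centralizer_centralizer (R := ℂ) S
    show Set.centralizer (Set.centralizer ((StarSubalgebra.centralizer ℂ
        ((StarSubalgebra.centralizer ℂ S : StarSubalgebra ℂ (H →L[ℂ] H)) : Set (H →L[ℂ] H))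
        : StarSubalgebra ℂ (H →L[ℂ] H)) : Set (H →L[ℂ] H)))
      = ((StarSubalgebra.centralizer ℂ
        ((StarSubalgebra.centralizer ℂ S : StarSubalgebra ℂ (H →L[ℂ] H)) : Set (H →L[ℂ] H))
        : StarSubalgebra ℂ (H →L[ℂ] H)) : Set (H →L[ℂ] H))
    rw [h]
    exact Set.centralizer_centralizer_centralizer _

theorem coe_vnGen (S : Set (H →L[ℂ] H)) :
    (vnGen S : Set (H →L[ℂ] H)) = Set.centralizer (Set.centralizer (S ∪ star S)) :=
  StarSubalgebra.coe_centralizer_centralizer (R := ℂ) S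

theorem subset_vnGen (S : Set (H →L[ℂ] H)) : S ⊆ (vnGen S : Set (H →L[ℂ] H)) := by
  rw [coe_vnGen]
  exact (Set.subset_union_left).trans (Set.subset_centralizer_centralizer)


theorem key (T : Set (H →L[ℂ] H)) (hTstar : star T = T) (p : H →L[ℂ] H)
    (hp : p ∈ Set.centralizer (Set.centralizer T))
    (ξ η : H) (hξ : p ξ = ξ) (hη : p η = 0) (hξ0 : ξ ≠ 0)
    (heq : ∀ w ∈ Submonoid.closure T,
      inner ℂ ξ (w ξ) = inner ℂ η (w η)) : False := by
  classical
  set E2 := WithLp 2 (H × H)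
  let L : E2 ≃L[ℂ] H × H := WithLp.prodContinuousLinearEquiv 2 ℂ H H
  let dg : (H →L[ℂ] H) → (E2 →L[ℂ] E2) := fun x =>
    ((L.symm : (H × H) →L[ℂ] E2).comp ((x.prodMap x).comp (L : E2 →L[ℂ] H × H)))
  have dg_apply : ∀ (x : H →L[ℂ] H) (a b : H),
      dg x (L.symm (a, b)) = L.symm (x a, x b) := by
    intro x a b
    simp [dg]
  set W := Submonoid.closure T with hW
  set G : Set E2 := (fun w : H →L[ℂ] H => L.symm (w ξ, w η)) '' (W : Set (H →L[ℂ] H)) with hG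
  set K : Submodule ℂ E2 := (Submodule.span ℂ G).topologicalClosure with hK
  haveI : CompleteSpace K := (Submodule.span ℂ G).isClosed_topologicalClosure.completeSpace_coe
  -- invariance of K under dg t for t ∈ T
  have hinv : ∀ t ∈ T, ∀ v ∈ K, dg t v ∈ K := by
    intro t ht v hv
    have hspan : ∀ y ∈ Submodule.span ℂ G, dg t y ∈ Submodule.span ℂ G := by
      intro y hy
      induction hy using Submodule.span_induction with
      | mem x hx =>
        obtain ⟨w, hw, rfl⟩ := hx
        rw [dg_apply]
        refine Submodule.subset_span ⟨t * w, mul_mem (Submonoid.subset_closure ht) hw, rfl⟩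
      | zero => simpa using Submodule.zero_mem _
      | add x y _ _ hx hy => simpa [map_add] using Submodule.add_mem _ hx hy
      | smul c x _ hx => simpa [map_smul] using Submodule.smul_mem _ c hx
    exact map_mem_closure (dg t).continuous hv hspan
  -- adjoint of dg
  have hadj : ∀ x : H →L[ℂ] H, ContinuousLinearMap.adjoint (dg x) = dg (ContinuousLinearMap.adjoint x) := by
    intro x
    symm
    rw [ContinuousLinearMap.eq_adjoint_iff]
    intro u v
    have hu : u = L.symm (L u) := (L.symm_apply_apply u).symm
    have hv2 : v = L.symm (L v) := (L.symm_apply_apply v).symm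
    rw [hu, hv2, dg_apply, dg_apply]
    show inner ℂ (_: E2) (_ : E2) = inner ℂ (_ : E2) (_ : E2)
    rw [WithLp.prod_inner_apply, WithLp.prod_inner_apply]
    have h1 : ∀ a b : H, (WithLp.ofLp (L.symm (a,b))).1 = a := fun a b => rfl
    have h2 : ∀ a b : H, (WithLp.ofLp (L.symm (a,b))).2 = b := fun a b => rfl
    simp only [h1, h2, ContinuousLinearMap.adjoint_inner_left]
  set P := K.orthogonalProjectionOnto with hP
  set Eop : E2 →L[ℂ] E2 := K.subtypeL.comp P with hEop
  have hEopK : ∀ u : E2, Eop u ∈ K := fun u => (P u).2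
  have hEopfix : ∀ u ∈ K, Eop u = u := by
    intro u hu
    exact K.starProjection_eq_self_iff.mpr hu
  -- Eop commutes with dg t for t ∈ T
  have hcomm : ∀ t ∈ T, ∀ u : E2, Eop (dg t u) = dg t (Eop u) := by
    intro t ht u
    have hstar : ContinuousLinearMap.adjoint (dg t) = dg (star t) := by
      rw [hadj, ContinuousLinearMap.star_eq_adjoint]
    have hst : star t ∈ T := by
      rw [← hTstar]
      simpa using ht
    refine K.eq_starProjection_of_mem_orthogonal (hinv t ht _ (P u).2) ?_
    have hsub : u - Eop u ∈ Kᗮ := K.sub_starProjection_mem_orthogonal u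
    have : dg t u - dg t (Eop u) = dg t (u - Eop u) := by rw [map_sub]
    rw [this]
    intro k hk
    rw [Submodule.mem_orthogonal] at hsub
    have := hsub _ (hinv (star t) hst k hk)
    calc inner ℂ k (dg t (u - Eop u))
        = inner ℂ (ContinuousLinearMap.adjoint (dg t) k) (u - Eop u) := by
          rw [ContinuousLinearMap.adjoint_inner_left]
      _ = 0 := by rw [hstar]; exact this
  -- coordinate maps and matrix entries of Eop
  set co1 : E2 →L[ℂ] H := (ContinuousLinearMap.fst ℂ H H).comp (L : E2 →L[ℂ] H × H) with hco1
  set co2 : E2 →L[ℂ] H := (ContinuousLinearMap.snd ℂ H H).comp (L : E2 →L[ℂ] H × H) with hco2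
  set in1 : H →L[ℂ] E2 := (L.symm : (H × H) →L[ℂ] E2).comp (ContinuousLinearMap.inl ℂ H H) with hin1
  set in2 : H →L[ℂ] E2 := (L.symm : (H × H) →L[ℂ] E2).comp (ContinuousLinearMap.inr ℂ H H) with hin2
  have hco1s : ∀ a b : H, co1 (L.symm (a, b)) = a := fun a b => by simp [hco1]
  have hco2s : ∀ a b : H, co2 (L.symm (a, b)) = b := fun a b => by simp [hco2]
  have hin1a : ∀ a : H, in1 a = L.symm (a, 0) := fun a => rfl
  have hin2a : ∀ a : H, in2 a = L.symm (0, a) := fun a => rfl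
  have hsplit : ∀ v : E2, in1 (co1 v) + in2 (co2 v) = v := by
    intro v
    rw [hin1a, hin2a, ← map_add]
    have : ((co1 v, 0) : H × H) + (0, co2 v) = L v := by
      ext <;> simp [hco1, hco2]
    rw [this, L.symm_apply_apply]
  have hco1dg : ∀ (x : H →L[ℂ] H) (v : E2), co1 (dg x v) = x (co1 v) := by
    intro x v; simp [hco1, dg]
  have hco2dg : ∀ (x : H →L[ℂ] H) (v : E2), co2 (dg x v) = x (co2 v) := by
    intro x v; simp [hco2, dg]
  have hin1dg : ∀ (x : H →L[ℂ] H) (a : H), dg x (in1 a) = in1 (x a) := by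
    intro x a; rw [hin1a, hin1a, dg_apply]; simp
  have hin2dg : ∀ (x : H →L[ℂ] H) (a : H), dg x (in2 a) = in2 (x a) := by
    intro x a; rw [hin2a, hin2a, dg_apply]; simp
  set e11 : H →L[ℂ] H := co1.comp (Eop.comp in1) with he11
  set e12 : H →L[ℂ] H := co1.comp (Eop.comp in2) with he12
  set e21 : H →L[ℂ] H := co2.comp (Eop.comp in1) with he21
  set e22 : H →L[ℂ] H := co2.comp (Eop.comp in2) with he22
  -- the entries belong to the centralizer of T
  have key_entry : ∀ (c : E2 →L[ℂ] H) (i : H →L[ℂ] E2),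
      (∀ x v, c (dg x v) = x (c v)) → (∀ x a, dg x (i a) = i (x a)) →
      ∀ t ∈ T, t * (c.comp (Eop.comp i)) = (c.comp (Eop.comp i)) * t := by
    intro c i hc hi t ht
    ext h
    show t (c (Eop (i h))) = c (Eop (i (t h)))
    rw [← hi t h, hcomm t ht, hc]
  have hc11 : e11 ∈ Set.centralizer T := fun t ht => key_entry co1 in1 hco1dg hin1dg t ht
  have hc12 : e12 ∈ Set.centralizer T := fun t ht => key_entry co1 in2 hco1dg hin2dg t ht
  have hc21 : e21 ∈ Set.centralizer T := fun t ht => key_entry co2 in1 hco2dg hin1dg t ht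
  have hc22 : e22 ∈ Set.centralizer T := fun t ht => key_entry co2 in2 hco2dg hin2dg t ht
  -- p commutes with the entries
  have hp11 := hp e11 hc11
  have hp12 := hp e12 hc12
  have hp21 := hp e21 hc21
  have hp22 := hp e22 hc22
  -- decomposition of Eop in terms of entries
  have hdecomp : ∀ v : E2, Eop v =
      (in1 (e11 (co1 v)) + in2 (e21 (co1 v))) + (in1 (e12 (co2 v)) + in2 (e22 (co2 v))) := by
    intro v
    have h1 : Eop (in1 (co1 v)) = in1 (e11 (co1 v)) + in2 (e21 (co1 v)) :=
      (hsplit (Eop (in1 (co1 v)))).symm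
    have h2 : Eop (in2 (co2 v)) = in1 (e12 (co2 v)) + in2 (e22 (co2 v)) :=
      (hsplit (Eop (in2 (co2 v)))).symm
    conv_lhs => rw [← hsplit v]
    rw [map_add, h1, h2]
  -- Eop commutes with dg p
  have hEp : ∀ u : E2, Eop (dg p u) = dg p (Eop u) := by
    intro u
    have hmul : ∀ (a b : H →L[ℂ] H) (h : H), a * b = b * a → a (b h) = b (a h) := by
      intro a b h hab
      have := congrArg (fun f : H →L[ℂ] H => f h) hab
      simpa using this
    rw [hdecomp (dg p u), hdecomp u, hco1dg, hco2dg]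
    simp only [map_add, hin1dg, hin2dg]
    rw [hmul e11 p _ hp11, hmul e21 p _ hp21, hmul e12 p _ hp12,
      hmul e22 p _ hp22]
  have hinner : ∀ a b c d : H,
      inner ℂ (L.symm (a, b) : E2) (L.symm (c, d) : E2) = inner ℂ a c + inner ℂ b d := by
    intro a b c d
    rw [WithLp.prod_inner_apply]
    rfl
  set v0 : E2 := L.symm (ξ, η) with hv0def
  have hv0 : v0 ∈ K := by
    apply Submodule.le_topologicalClosure _
    apply Submodule.subset_span
    exact ⟨1, W.one_mem, by simp [hv0def]⟩
  have hdgp : dg p v0 = L.symm (ξ, 0) := by rw [hv0def, dg_apply, hξ, hη]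
  have hdgpK : dg p v0 ∈ K := by
    have h : dg p v0 = Eop (dg p v0) := by rw [hEp, hEopfix v0 hv0]
    rw [h]; exact hEopK _
  set w0 : E2 := L.symm (ξ, -η) with hw0def
  have hker : ∀ v ∈ K, inner ℂ w0 v = 0 := by
    intro v hv
    have hle : K ≤ LinearMap.ker (innerSL ℂ w0 : E2 →ₗ[ℂ] ℂ) := by
      apply Submodule.topologicalClosure_minimal
      · rw [Submodule.span_le]
        rintro _ ⟨w, hw, rfl⟩
        simp only [SetLike.mem_coe, LinearMap.mem_ker]
        show inner ℂ w0 (L.symm (w ξ, w η)) = 0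
        rw [hw0def, hinner, inner_neg_left, heq w hw]
        ring
      · exact ContinuousLinearMap.isClosed_ker _
    have := hle hv
    rw [LinearMap.mem_ker] at this
    exact this
  have hfin := hker _ hdgpK
  rw [hdgp, hw0def, hinner, inner_zero_right, add_zero] at hfin
  exact hξ0 (inner_self_eq_zero.mp hfin)


/-- For every von Neumann algebra `M`, `dec(M) ≤ 𝔠 ^ gen(M)`. -/
theorem stmt_1 (M : VonNeumannAlgebra H) : dec M ≤ Cardinal.continuum ^ gen M := by
  classical
  have hne : {κ : Cardinal.{u} | κ ≠ 0 ∧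
      ∃ S : Set (H →L[ℂ] H), Generates M S ∧ Cardinal.mk S ≤ κ}.Nonempty := by
    refine ⟨Cardinal.mk (M : Set (H →L[ℂ] H)), ?_, (M : Set (H →L[ℂ] H)),
      ⟨subset_rfl, fun N h => h⟩, le_rfl⟩
    rw [Cardinal.mk_ne_zero_iff]
    exact ⟨⟨1, M.toStarSubalgebra.one_mem'⟩⟩
  have hgenmem : gen M ∈ {κ : Cardinal.{u} | κ ≠ 0 ∧
      ∃ S : Set (H →L[ℂ] H), Generates M S ∧ Cardinal.mk S ≤ κ} := csInf_mem hne
  obtain ⟨hgen0, S, hGen, hcard⟩ := hgenmem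
  set T : Set (H →L[ℂ] H) := S ∪ star S with hT
  have hTstar : star T = T := by
    ext x
    simp only [hT, Set.mem_star, Set.mem_union, star_star]
    exact or_comm
  set W := Submonoid.closure T with hWdef
  -- cardinality of W
  have hWle : Cardinal.mk ↥W ≤ max Cardinal.aleph0 (Cardinal.mk ↥T) := by
    have hex : ∀ w : ↥W, ∃ l : List (H →L[ℂ] H), (∀ y ∈ l, y ∈ T) ∧ l.prod = (w : H →L[ℂ] H) :=
      fun w => Submonoid.exists_list_of_mem_closure w.2
    choose ℓ hℓT hℓprod using hex
    have hinj : Function.Injective fun w : ↥W =>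
        ((ℓ w).attach.map fun y => (⟨y.1, hℓT w y.1 y.2⟩ : ↥T)) := by
      intro w1 w2 h
      have h2 : (ℓ w1) = (ℓ w2) := by
        have := congrArg (List.map (Subtype.val : ↥T → (H →L[ℂ] H))) h
        simpa [List.map_map, List.attach_map_val] using this
      apply Subtype.ext
      rw [← hℓprod w1, ← hℓprod w2, h2]
    calc Cardinal.mk ↥W ≤ Cardinal.mk (List ↥T) := Cardinal.mk_le_of_injective hinj
      _ ≤ max Cardinal.aleph0 (Cardinal.mk ↥T) := Cardinal.mk_list_le_max _
  have hTle : Cardinal.mk ↥T ≤ Cardinal.mk ↥S + Cardinal.mk ↥S := by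
    refine (Cardinal.mk_union_le S (star S)).trans ?_
    have : Cardinal.mk ↥(star S) = Cardinal.mk ↥S := by
      refine Cardinal.mk_congr ⟨fun x => ⟨star x.1, Set.mem_star.mp x.2⟩,
        fun x => ⟨star x.1, ?_⟩, fun x => ?_, fun x => ?_⟩
      · simp [Set.mem_star, x.2]
      · apply Subtype.ext; simp
      · apply Subtype.ext; simp
    rw [this]
  -- main estimate per family
  haveI : Nonempty {P : Set (H →L[ℂ] H) //
      (∀ p ∈ P, IsProjectionIn M p ∧ p ≠ 0) ∧ P.Pairwise fun p q => p * q = 0} :=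
    ⟨⟨∅, by simp, by simp⟩⟩
  rw [dec]
  apply ciSup_le'
  rintro ⟨P, hPproj, hPorth⟩
  have hvec : ∀ p : ↥P, ∃ ξ : H, (p : H →L[ℂ] H) ξ = ξ ∧ ξ ≠ 0 := by
    rintro ⟨p, hp⟩
    obtain ⟨hproj, hne0⟩ := hPproj p hp
    have hex : ∃ h, p h ≠ 0 := by
      by_contra hc
      push_neg at hc
      exact hne0 (by ext h; simpa using hc h)
    obtain ⟨h, hh⟩ := hex
    refine ⟨p h, ?_, hh⟩
    calc p (p h) = (p * p) h := rfl
      _ = p h := by rw [hproj.2.1]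
  choose ξv hξfix hξ0 using hvec
  set F : ↥P → (↥W → ULift.{u} ℂ) :=
    fun p w => ULift.up (inner ℂ (ξv p) ((w : H →L[ℂ] H) (ξv p))) with hF
  have hMsub : (M : Set (H →L[ℂ] H)) ⊆ (vnGen S : Set (H →L[ℂ] H)) :=
    hGen.2 _ (subset_vnGen S)
  have hinj : Function.Injective F := by
    intro p q hpq
    by_contra hne
    have hvalne : (p : H →L[ℂ] H) ≠ (q : H →L[ℂ] H) := fun h => hne (Subtype.ext h)
    have horth : (p : H →L[ℂ] H) * (q : H →L[ℂ] H) = 0 := hPorth p.2 q.2 hvalne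
    have hpmem : (p : H →L[ℂ] H) ∈ Set.centralizer (Set.centralizer T) := by
      have hm := hMsub (hPproj p p.2).1.1
      rwa [coe_vnGen] at hm
    refine key T hTstar p hpmem (ξv p) (ξv q) (hξfix p) ?_ (hξ0 p) ?_
    · calc (p : H →L[ℂ] H) (ξv q) = (p : H →L[ℂ] H) ((q : H →L[ℂ] H) (ξv q)) := by
            rw [hξfix q]
        _ = ((p : H →L[ℂ] H) * (q : H →L[ℂ] H)) (ξv q) := rfl
        _ = 0 := by rw [horth]; rfl
    · intro w hw
      have h1 := congrFun hpq ⟨w, hw⟩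
      exact congrArg ULift.down h1
  have h1 : Cardinal.mk ↥P ≤ Cardinal.mk (↥W → ULift.{u} ℂ) :=
    Cardinal.mk_le_of_injective hinj
  have h2 : Cardinal.mk (↥W → ULift.{u} ℂ) = Cardinal.continuum ^ Cardinal.mk ↥W := by
    rw [← Cardinal.power_def, Cardinal.mk_uLift, Cardinal.mk_complex, Cardinal.lift_continuum]
  have h3 : Cardinal.mk ↥P ≤ Cardinal.continuum ^ max Cardinal.aleph0 (Cardinal.mk ↥T) := by
    rw [h2] at h1
    exact h1.trans (Cardinal.power_le_power_left Cardinal.continuum_ne_zero hWle)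
  rcases le_or_gt Cardinal.aleph0 (gen M) with hinf | hfin
  · refine h3.trans (Cardinal.power_le_power_left Cardinal.continuum_ne_zero ?_)
    refine max_le hinf ?_
    refine hTle.trans ?_
    calc Cardinal.mk ↥S + Cardinal.mk ↥S ≤ gen M + gen M := add_le_add hcard hcard
      _ = gen M := Cardinal.add_eq_self hinf
  · have hTfin : Cardinal.mk ↥T ≤ Cardinal.aleph0 := by
      refine hTle.trans ?_
      have : Cardinal.mk ↥S + Cardinal.mk ↥S < Cardinal.aleph0 :=
        Cardinal.add_lt_aleph0 (hcard.trans_lt hfin) (hcard.trans_lt hfin)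
      exact this.le
    rw [max_eq_left hTfin, Cardinal.continuum_power_aleph0] at h3
    refine h3.trans ?_
    calc Cardinal.continuum = Cardinal.continuum ^ (1 : Cardinal.{u}) :=
        (Cardinal.power_one _).symm
      _ ≤ Cardinal.continuum ^ gen M :=
        Cardinal.power_le_power_left Cardinal.continuum_ne_zero
          (Cardinal.one_le_iff_ne_zero.mpr hgen0)



end VNPaper
end
end

section
/- Let M be a von Neumann algebra on a complex Hilbert space H and let (e_i)_{i∈I} be a family of pairwise orthogonal nonzero central projections of M summing to 1. Then dec(M) = Σ_{i∈I} dec_{e_i}(M), where the sum is a cardinal sum. -/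
noncomputable section

open scoped ENNReal

universe u

namespace VNPaper

variable {H : Type u} [NormedAddCommGroup H] [InnerProductSpace ℂ H] [CompleteSpace H]

section Proof

/-- suprema of cardinals below ℵ₀ are attained. -/
private lemma ciSup_attained {ι : Type v} [Nonempty ι] (g : ι → Cardinal.{v})
    (hb : BddAbove (Set.range g)) (h : (⨆ i, g i) < Cardinal.aleph0) :
    ∃ i, g i = ⨆ i, g i := by
  by_contra hc
  push_neg at hc
  have hlt : ∀ i, g i < ⨆ i, g i := fun i => (le_ciSup hb i).lt_of_ne (hc i)
  obtain ⟨n, hn⟩ := Cardinal.lt_aleph0.mp h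
  cases n with
  | zero =>
    have := hlt (Classical.arbitrary ι)
    rw [hn] at this
    exact absurd this (by simp)
  | succ m =>
    have hle : ∀ i, g i ≤ (m : Cardinal) := by
      intro i
      have := hlt i
      rw [hn, Cardinal.nat_succ] at this
      exact Order.lt_succ_iff.mp this
    have : (⨆ i, g i) ≤ (m : Cardinal) := ciSup_le' hle
    rw [hn] at this
    exact absurd this (by exact_mod_cast Nat.not_succ_le_self m)

theorem stmt_9' (M : VonNeumannAlgebra H) {I : Type u} (e : I → (H →L[ℂ] H))
    (he : IsCentralPartition M e) :
    dec M = Cardinal.sum (fun i => decCorner M (e i)) := by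
  obtain ⟨hproj, horth, hspan⟩ := he
  have heM : ∀ i, e i ∈ M := fun i => (hproj i).1.1
  have hecomm : ∀ i, ∀ y ∈ M, e i * y = y * e i := fun i => (hproj i).1.2
  have heidem : ∀ i, e i * e i = e i := fun i => (hproj i).2.1
  have hestar : ∀ i, star (e i) = e i := fun i => (hproj i).2.2.1
  have hene : ∀ i, e i ≠ 0 := fun i => (hproj i).2.2.2
  -- a nonzero operator does not annihilate all e i
  have key : ∀ p : H →L[ℂ] H, (∀ i, p * e i = 0) → p = 0 := by
    intro p hp
    have hsub : Submodule.span ℂ (⋃ i, Set.range (e i)) ≤ LinearMap.ker (p : H →ₗ[ℂ] H) := by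
      rw [Submodule.span_le]
      rintro x hx
      simp only [Set.mem_iUnion, Set.mem_range] at hx
      obtain ⟨i, y, rfl⟩ := hx
      have h0 : (p * e i) y = 0 := by rw [hp i]; rfl
      simpa [LinearMap.mem_ker] using h0
    have hcl : (Submodule.span ℂ (⋃ i, Set.range (e i))).topologicalClosure ≤ LinearMap.ker (p : H →ₗ[ℂ] H) :=
      Submodule.topologicalClosure_minimal _ hsub (ContinuousLinearMap.isClosed_ker p)
    rw [hspan] at hcl
    ext x
    exact hcl (Submodule.mem_top (x := x))
  -- corner pieces of projections are projections in the corner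
  have hpiece : ∀ i, ∀ p : H →L[ℂ] H, IsProjectionIn M p → p * e i ≠ 0 →
      IsProjectionIn M (p * e i) ∧ p * e i ≠ 0 ∧ (p * e i) * e i = p * e i := by
    intro i p ⟨hpM, hpidem, hpstar⟩ hne
    have hcomm : e i * p = p * e i := hecomm i p hpM
    refine ⟨⟨mul_mem hpM (heM i), ?_, ?_⟩, hne, ?_⟩
    · calc (p * e i) * (p * e i) = p * (e i * p) * e i := by noncomm_ring
        _ = p * (p * e i) * e i := by rw [hcomm]
        _ = (p * p) * (e i * e i) := by noncomm_ring
        _ = p * e i := by rw [hpidem, heidem]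
    · rw [star_mul, hestar i, hpstar, hcomm]
    · calc (p * e i) * e i = p * (e i * e i) := by noncomm_ring
        _ = p * e i := by rw [heidem]
  have hbddC : ∀ (cond : Set (H →L[ℂ] H) → Prop),
      BddAbove (Set.range fun P : {P : Set (H →L[ℂ] H) // cond P} => Cardinal.mk P.1) := by
    intro cond
    refine ⟨Cardinal.mk (H →L[ℂ] H), ?_⟩
    rintro x ⟨P, rfl⟩
    exact Cardinal.mk_set_le _
  apply le_antisymm
  · -- dec M ≤ sum
    apply ciSup_le'
    rintro ⟨P, hPproj, hPorth⟩
    -- the corner pieces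
    set f : I → Set (H →L[ℂ] H) := fun i => (fun p => p * e i) '' {p ∈ P | p * e i ≠ 0} with hf
    have hchoice : ∀ p : P, ∃ i, (p : H →L[ℂ] H) * e i ≠ 0 := by
      rintro ⟨p, hp⟩
      by_contra hc
      push_neg at hc
      exact (hPproj p hp).2 (key p hc)
    set g : P → Σ i, (f i : Set (H →L[ℂ] H)) := fun p =>
      ⟨(hchoice p).choose, ⟨(p : H →L[ℂ] H) * e ((hchoice p).choose),
        Set.mem_image_of_mem _ ⟨p.2, (hchoice p).choose_spec⟩⟩⟩ with hg
    have hginj : Function.Injective g := by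
      rintro p q hpq
      have hpq' : (⟨(g p).1, ((g p).2 : H →L[ℂ] H)⟩ : Σ _ : I, H →L[ℂ] H)
          = ⟨(g q).1, ((g q).2 : H →L[ℂ] H)⟩ := by rw [hpq]
      obtain ⟨h1, h2⟩ := Sigma.mk.inj_iff.mp hpq'
      set i := (hchoice p).choose with hi
      have h2' : (p : H →L[ℂ] H) * e i = (q : H →L[ℂ] H) * e i := by
        have h3 : (p : H →L[ℂ] H) * e (hchoice p).choose =
            (q : H →L[ℂ] H) * e (hchoice q).choose := eq_of_heq h2
        simp only [hg] at h3 h1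
        rw [← h1] at h3
        exact h3
      by_contra hne
      have hpq0 : (p : H →L[ℂ] H) * (q : H →L[ℂ] H) = 0 :=
        hPorth p.2 q.2 (fun h => hne (Subtype.ext h))
      have hcomm : e i * (q : H →L[ℂ] H) = (q : H →L[ℂ] H) * e i :=
        hecomm i _ (hPproj q q.2).1.1
      have : (p : H →L[ℂ] H) * e i = 0 := by
        calc (p : H →L[ℂ] H) * e i
            = ((p : H →L[ℂ] H) * e i) * ((p : H →L[ℂ] H) * e i) :=
              ((hpiece i p (hPproj p p.2).1 (hchoice p).choose_spec).1.2.1).symm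
          _ = ((p : H →L[ℂ] H) * e i) * ((q : H →L[ℂ] H) * e i) := by rw [← h2']
          _ = (p : H →L[ℂ] H) * (e i * (q : H →L[ℂ] H)) * e i := by noncomm_ring
          _ = ((p : H →L[ℂ] H) * (q : H →L[ℂ] H)) * (e i * e i) := by rw [hcomm]; noncomm_ring
          _ = 0 := by rw [hpq0, zero_mul]
      exact (hchoice p).choose_spec this
    calc Cardinal.mk P ≤ Cardinal.mk (Σ i, (f i : Set (H →L[ℂ] H))) :=
          Cardinal.mk_le_of_injective hginj
      _ = Cardinal.sum (fun i => Cardinal.mk (f i)) := Cardinal.mk_sigma _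
      _ ≤ Cardinal.sum (fun i => decCorner M (e i)) := by
          apply Cardinal.sum_le_sum
          intro i
          have hadm : (∀ p ∈ f i, IsProjectionIn M p ∧ p ≠ 0 ∧ p * e i = p) ∧
              (f i).Pairwise fun p q => p * q = 0 := by
            constructor
            · rintro x ⟨p, ⟨hpP, hpne⟩, rfl⟩
              exact hpiece i p (hPproj p hpP).1 hpne
            · rintro x ⟨p, ⟨hpP, hpne⟩, rfl⟩ y ⟨q, ⟨hqP, hqne⟩, rfl⟩ hxy
              have hpq : p ≠ q := fun h => hxy (by rw [h])
              have hpq0 : p * q = 0 := hPorth hpP hqP hpq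
              have hcomm : e i * q = q * e i := hecomm i _ (hPproj q hqP).1.1
              calc (p * e i) * (q * e i) = p * (e i * q) * e i := by noncomm_ring
                _ = (p * q) * (e i * e i) := by rw [hcomm]; noncomm_ring
                _ = 0 := by rw [hpq0, zero_mul]
          exact le_ciSup (hbddC _) (⟨f i, hadm⟩ :
            {P : Set (H →L[ℂ] H) // (∀ p ∈ P, IsProjectionIn M p ∧ p ≠ 0 ∧ p * e i = p) ∧
              P.Pairwise fun p q => p * q = 0})
  · -- sum ≤ dec M
    have hcornerle : ∀ i, decCorner M (e i) ≤ dec M := by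
      intro i
      apply ciSup_le'
      rintro ⟨P, hP1, hP2⟩
      exact le_ciSup (hbddC _)
        (⟨P, fun p hp => ⟨(hP1 p hp).1, (hP1 p hp).2.1⟩, hP2⟩ :
          {P : Set (H →L[ℂ] H) // (∀ p ∈ P, IsProjectionIn M p ∧ p ≠ 0) ∧
            P.Pairwise fun p q => p * q = 0})
    have heinj : Function.Injective e := by
      intro i j hij
      by_contra hne
      have := horth i j hne
      rw [hij, heidem j] at this
      exact hene j this
    have hIle : Cardinal.mk I ≤ dec M := by
      have hadm : (∀ p ∈ Set.range e, IsProjectionIn M p ∧ p ≠ 0) ∧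
          (Set.range e).Pairwise fun p q => p * q = 0 := by
        constructor
        · rintro p ⟨i, rfl⟩
          exact ⟨⟨heM i, heidem i, hestar i⟩, hene i⟩
        · rintro p ⟨i, rfl⟩ q ⟨j, rfl⟩ hne
          exact horth i j (fun h => hne (by rw [h]))
      calc Cardinal.mk I = Cardinal.mk (Set.range e) := (Cardinal.mk_range_eq e heinj).symm
        _ ≤ dec M := le_ciSup (hbddC _) ⟨Set.range e, hadm⟩
    by_cases hfin : Cardinal.mk I < Cardinal.aleph0 ∧ ∀ i, decCorner M (e i) < Cardinal.aleph0
    · -- finite case: suprema attained, take the union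
      obtain ⟨hIfin, hafin⟩ := hfin
      have hattain : ∀ i, ∃ P : {P : Set (H →L[ℂ] H) //
          (∀ p ∈ P, IsProjectionIn M p ∧ p ≠ 0 ∧ p * e i = p) ∧
            P.Pairwise fun p q => p * q = 0}, Cardinal.mk P.1 = decCorner M (e i) := by
        intro i
        have hne : Nonempty {P : Set (H →L[ℂ] H) //
            (∀ p ∈ P, IsProjectionIn M p ∧ p ≠ 0 ∧ p * e i = p) ∧
              P.Pairwise fun p q => p * q = 0} :=
          ⟨⟨∅, fun p hp => absurd hp (Set.notMem_empty p), Set.pairwise_empty _⟩⟩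
        exact ciSup_attained _ (hbddC _) (hafin i)
      choose P hP using hattain
      set U : Set (H →L[ℂ] H) := ⋃ i, (P i).1 with hU
      have hmemmul : ∀ i j, i ≠ j → ∀ p ∈ (P i).1, ∀ q ∈ (P j).1, p * q = 0 := by
        intro i j hij p hp q hq
        have hpe : p * e i = p := ((P i).2.1 p hp).2.2
        have hqe : q * e j = q := ((P j).2.1 q hq).2.2
        have hcomm : e i * q = q * e i := hecomm i _ ((P j).2.1 q hq).1.1
        calc p * q = (p * e i) * (q * e j) := by rw [hpe, hqe]
          _ = p * (e i * q) * e j := by noncomm_ring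
          _ = (p * q) * (e i * e j) := by rw [hcomm]; noncomm_ring
          _ = 0 := by rw [horth i j hij, mul_zero]
      have hdisj : Pairwise (Function.onFun Disjoint fun i => (P i).1) := by
        intro i j hij
        rw [Function.onFun, Set.disjoint_left]
        intro p hpi hpj
        have hpe : p * e i = p := ((P i).2.1 p hpi).2.2
        have hpe' : p * e j = p := ((P j).2.1 p hpj).2.2
        have : p = 0 := by
          calc p = (p * e i) * e j := by rw [hpe, hpe']
            _ = p * (e i * e j) := by noncomm_ring
            _ = 0 := by rw [horth i j hij, mul_zero]
        exact ((P i).2.1 p hpi).2.1 this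
      have hadm : (∀ p ∈ U, IsProjectionIn M p ∧ p ≠ 0) ∧
          U.Pairwise fun p q => p * q = 0 := by
        constructor
        · intro p hp
          obtain ⟨i, hpi⟩ := Set.mem_iUnion.mp hp
          exact ⟨((P i).2.1 p hpi).1, ((P i).2.1 p hpi).2.1⟩
        · intro p hp q hq hne
          obtain ⟨i, hpi⟩ := Set.mem_iUnion.mp hp
          obtain ⟨j, hqj⟩ := Set.mem_iUnion.mp hq
          by_cases hij : i = j
          · subst hij
            exact (P i).2.2 hpi hqj hne
          · exact hmemmul i j hij p hpi q hqj
      calc Cardinal.sum (fun i => decCorner M (e i))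
          = Cardinal.sum (fun i => Cardinal.mk ((P i).1)) := by
            congr 1; funext i; exact (hP i).symm
        _ = Cardinal.mk U := (Cardinal.mk_iUnion_eq_sum_mk hdisj).symm
        _ ≤ dec M := le_ciSup (hbddC _) ⟨U, hadm⟩
    · -- infinite case
      have hinf : Cardinal.aleph0 ≤ dec M := by
        rw [not_and_or] at hfin
        rcases hfin with h | h
        · exact le_trans (not_lt.mp h) hIle
        · push_neg at h
          obtain ⟨i, hi⟩ := h
          exact le_trans hi (hcornerle i)
      calc Cardinal.sum (fun i => decCorner M (e i))
          ≤ Cardinal.sum (fun _ : I => dec M) := Cardinal.sum_le_sum _ _ hcornerle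
        _ = Cardinal.mk I * dec M := Cardinal.sum_const' I (dec M)
        _ ≤ dec M * dec M := mul_le_mul' hIle le_rfl
        _ = dec M := Cardinal.mul_eq_self hinf

end Proof

/-- `dec` is additive over a central partition. -/
theorem stmt_9 (M : VonNeumannAlgebra H) {I : Type u} (e : I → (H →L[ℂ] H))
    (he : IsCentralPartition M e) :
    dec M = Cardinal.sum (fun i => decCorner M (e i)) :=
  stmt_9' M e he

end VNPaper
end
end

section
/- If a von Neumann algebra M on a complex Hilbert space satisfies dec(M) > ℵ₀ · gen(M), then dec(M) = dec(Z(M)). -/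
noncomputable section

open scoped ENNReal

universe u

namespace VNPaper

variable {H : Type u} [NormedAddCommGroup H] [InnerProductSpace ℂ H] [CompleteSpace H]

open scoped Classical


/-- The closed subspace spanned by a set. -/
def cspan (U : Set H) : Submodule ℂ H := (Submodule.span ℂ U).topologicalClosure

instance (U : Set H) : CompleteSpace (cspan U) :=
  (Submodule.isClosed_topologicalClosure _).completeSpace_coe

/-- The orthogonal projection onto the closed span of `U`, as an operator on `H`. -/
def orth (U : Set H) : H →L[ℂ] H :=
  (cspan U).subtypeL ∘L (cspan U).orthogonalProjectionOnto

lemma orth_apply_mem (U : Set H) (v : H) : orth U v ∈ cspan U := by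
  simpa [orth] using ((cspan U).orthogonalProjectionOnto v).2

lemma subset_cspan (U : Set H) : U ⊆ (cspan U : Set H) := fun u hu =>
  Submodule.le_topologicalClosure _ (Submodule.subset_span hu)

lemma orth_eq_self (U : Set H) {v : H} (hv : v ∈ cspan U) : orth U v = v := by
  have := Submodule.orthogonalProjectionOnto_mem_subspace_eq_self (K := cspan U) ⟨v, hv⟩
  simpa [orth] using congrArg (Subtype.val) this

lemma orth_eq_zero (U : Set H) {v : H} (hv : v ∈ (cspan U)ᗮ) : orth U v = 0 := by
  simp [orth, Submodule.orthogonalProjectionOnto_apply_of_mem_orthogonal hv]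

lemma star_orth (U : Set H) : star (orth U) = orth U :=
  isSelfAdjoint_starProjection (cspan U)

lemma orth_mul_orth (U : Set H) : orth U * orth U = orth U := by
  ext v
  exact orth_eq_self U (orth_apply_mem U v)

lemma orth_ne_zero (U : Set H) {v : H} (hv : v ∈ cspan U) (hv0 : v ≠ 0) : orth U ≠ 0 := by
  intro h
  exact hv0 (by rw [← orth_eq_self U hv, h]; rfl)

/-- If a closed span is invariant under `t` and `star t`, then `t` commutes with the
orthogonal projection onto it. -/
lemma orth_comm {U : Set H} {t : H →L[ℂ] H}
    (h1 : ∀ v ∈ cspan U, t v ∈ cspan U)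
    (h2 : ∀ v ∈ cspan U, star t v ∈ cspan U) :
    t * orth U = orth U * t := by
  ext v
  have key : (cspan U).starProjection (t v) = t (orth U v) := by
    apply Submodule.eq_starProjection_of_mem_of_inner_eq_zero
    · exact h1 _ (orth_apply_mem U v)
    · intro w hw
      have hsub : v - orth U v ∈ (cspan U)ᗮ := by
        exact Submodule.sub_starProjection_mem_orthogonal (K := cspan U) v
      have : t v - t (orth U v) = t (v - orth U v) := by simp [map_sub]
      rw [this]
      have : (inner ℂ (t (v - orth U v)) w : ℂ) = inner ℂ (v - orth U v) (star t w) := by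
        rw [ContinuousLinearMap.star_eq_adjoint]
        exact (ContinuousLinearMap.adjoint_inner_right t _ _).symm
      rw [this]
      exact ((cspan U).mem_orthogonal' _).1 hsub _ (h2 _ hw)
  show t (orth U v) = orth U (t v)
  rw [← key]; rfl

/-- Invariance of a closed span from invariance on generators. -/
lemma cspan_invariant {U : Set H} {t : H →L[ℂ] H}
    (h : ∀ u ∈ U, t u ∈ Submodule.span ℂ U) :
    ∀ v ∈ cspan U, t v ∈ cspan U := by
  have hspan : ∀ v ∈ Submodule.span ℂ U, t v ∈ Submodule.span ℂ U := by
    intro v hv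
    induction hv using Submodule.span_induction with
    | mem x hx => exact h x hx
    | zero => simp
    | add x y _ _ hx hy => rw [map_add]; exact add_mem hx hy
    | smul c x _ hx => rw [map_smul]; exact Submodule.smul_mem _ _ hx
  intro v hv
  have hv' : v ∈ closure (Submodule.span ℂ U : Set H) := hv
  have : t v ∈ t '' closure (Submodule.span ℂ U : Set H) := ⟨v, hv', rfl⟩
  have := image_closure_subset_closure_image t.continuous this
  refine closure_mono ?_ this
  rintro _ ⟨x, hx, rfl⟩
  exact hspan x hx

/-- A continuous linear map vanishing on generators vanishes on the closed span. -/
lemma eq_zero_on_cspan {F : Type*} [NormedAddCommGroup F] [NormedSpace ℂ F]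
    {U : Set H} {t : H →L[ℂ] F} (h : ∀ u ∈ U, t u = 0) :
    ∀ v ∈ cspan U, t v = 0 := by
  intro v hv
  have : cspan U ≤ LinearMap.ker (t : H →ₗ[ℂ] F) := by
    apply Submodule.topologicalClosure_minimal
    · rw [Submodule.span_le]
      intro u hu
      exact h u hu
    · exact ContinuousLinearMap.isClosed_ker t
  exact this hv


/-- The von Neumann algebra generated by a set, realized as a double centralizer. -/
def genVN (T : Set (H →L[ℂ] H)) : VonNeumannAlgebra H where
  toStarSubalgebra := StarSubalgebra.centralizer ℂ
    ((StarSubalgebra.centralizer ℂ T : StarSubalgebra ℂ (H →L[ℂ] H)) : Set (H →L[ℂ] H))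
  centralizer_centralizer' := by
    have h : ((StarSubalgebra.centralizer ℂ
        ((StarSubalgebra.centralizer ℂ T : StarSubalgebra ℂ (H →L[ℂ] H)) :
          Set (H →L[ℂ] H))) : Set (H →L[ℂ] H))
        = (T ∪ star T).centralizer.centralizer :=
      StarSubalgebra.coe_centralizer_centralizer ℂ T
    show Set.centralizer (Set.centralizer ((StarSubalgebra.centralizer ℂ
        ((StarSubalgebra.centralizer ℂ T : StarSubalgebra ℂ (H →L[ℂ] H)) :
          Set (H →L[ℂ] H))) : Set (H →L[ℂ] H)))
      = ((StarSubalgebra.centralizer ℂ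
        ((StarSubalgebra.centralizer ℂ T : StarSubalgebra ℂ (H →L[ℂ] H)) :
          Set (H →L[ℂ] H))) : Set (H →L[ℂ] H))
    rw [h]
    exact congrArg (fun s : Set (H →L[ℂ] H) => Set.centralizer s)
      (Set.centralizer_centralizer_centralizer (T ∪ star T))

lemma genVN_carrier (T : Set (H →L[ℂ] H)) :
    (genVN T : Set (H →L[ℂ] H)) = (T ∪ star T).centralizer.centralizer :=
  StarSubalgebra.coe_centralizer_centralizer ℂ T

lemma subset_genVN (T : Set (H →L[ℂ] H)) : T ⊆ (genVN T : Set (H →L[ℂ] H)) := by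
  rw [genVN_carrier]
  exact fun t ht => Set.subset_centralizer_centralizer (Set.mem_union_left _ ht)

/-- If `e` commutes with every element of `T` (hence with `star T` as well), then `e`
commutes with every element of the von Neumann algebra generated by `T`. -/
lemma genVN_commute {T : Set (H →L[ℂ] H)} {g e : H →L[ℂ] H}
    (hg : g ∈ (genVN T : Set (H →L[ℂ] H)))
    (he : ∀ t ∈ T, t * e = e * t) (he' : ∀ t ∈ T, star t * e = e * star t) :
    e * g = g * e := by
  rw [genVN_carrier] at hg
  refine hg e ?_
  rw [Set.mem_centralizer_iff]
  rintro t (ht | ht)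
  · exact he t ht
  · rw [Set.mem_star] at ht
    have := he' _ ht
    simpa using this

lemma proj_inner_self (p : H →L[ℂ] H) (hp : p * p = p) (hps : star p = p) (ζ : H) :
    (inner ℂ ζ (p ζ) : ℂ) = inner ℂ (p ζ) (p ζ) := by
  have h1 : p ζ = p (p ζ) := by
    conv_lhs => rw [← hp]
    rfl
  calc (inner ℂ ζ (p ζ) : ℂ) = inner ℂ ζ (p (p ζ)) := by rw [← h1]
    _ = inner ℂ ζ (ContinuousLinearMap.adjoint p (p ζ)) := by
        rw [← ContinuousLinearMap.star_eq_adjoint, hps]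
    _ = inner ℂ (p ζ) (p ζ) := ContinuousLinearMap.adjoint_inner_right p ζ (p ζ)

lemma bessel_sum (F : Finset (H →L[ℂ] H)) (hF : ∀ p ∈ F, p * p = p ∧ star p = p)
    (horth : ∀ p ∈ F, ∀ q ∈ F, p ≠ q → p * q = 0) (ζ : H) :
    ∑ p ∈ F, ‖p ζ‖ ^ 2 ≤ ‖ζ‖ ^ 2 := by
  set q : H →L[ℂ] H := ∑ p ∈ F, p with hq
  have hqs : star q = q := by
    rw [hq, star_sum]
    exact Finset.sum_congr rfl fun p hp => (hF p hp).2
  have hqq : q * q = q := by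
    rw [hq, Finset.sum_mul_sum]
    refine Finset.sum_congr rfl fun p hp => ?_
    rw [Finset.sum_eq_single p (fun r hr hne => horth p hp r hr (Ne.symm hne))
      (fun h => absurd hp h)]
    exact (hF p hp).1
  have happ : q ζ = ∑ p ∈ F, p ζ := by rw [hq]; simp
  have h0 : (inner ℂ ζ (q ζ) : ℂ) = ∑ p ∈ F, (inner ℂ ζ (p ζ) : ℂ) := by
    rw [happ, inner_sum]
  have h1 : (inner ℂ ζ (q ζ) : ℂ) = inner ℂ (q ζ) (q ζ) := proj_inner_self q hqq hqs ζ
  have h2 : ∑ p ∈ F, ‖p ζ‖ ^ 2 = ‖q ζ‖ ^ 2 := by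
    have : ∀ p ∈ F, ‖p ζ‖ ^ 2 = RCLike.re (inner ℂ ζ (p ζ) : ℂ) := by
      intro p hp
      rw [proj_inner_self p (hF p hp).1 (hF p hp).2 ζ, inner_self_eq_norm_sq]
    rw [Finset.sum_congr rfl this, ← map_sum, ← h0, h1, inner_self_eq_norm_sq]
  rw [h2]
  have h3 : ‖q ζ‖ ^ 2 ≤ ‖ζ‖ * ‖q ζ‖ := by
    have := norm_inner_le_norm (𝕜 := ℂ) ζ (q ζ)
    have hre : RCLike.re (inner ℂ ζ (q ζ) : ℂ) ≤ ‖(inner ℂ ζ (q ζ) : ℂ)‖ := RCLike.re_le_norm _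
    have : RCLike.re (inner ℂ ζ (q ζ) : ℂ) ≤ ‖ζ‖ * ‖q ζ‖ := le_trans hre this
    rw [h1, inner_self_eq_norm_sq] at this
    exact this
  nlinarith [norm_nonneg (q ζ), norm_nonneg ζ]

lemma bessel_countable (P : Set (H →L[ℂ] H)) (hP : ∀ p ∈ P, p * p = p ∧ star p = p)
    (hPo : P.Pairwise fun p q => p * q = 0) (ζ : H) :
    {j : ↥P | (j : H →L[ℂ] H) ζ ≠ 0}.Countable := by
  have hsub : {j : ↥P | (j : H →L[ℂ] H) ζ ≠ 0} ⊆
      ⋃ n : ℕ, {j : ↥P | 1 / ((n : ℝ) + 1) ≤ ‖(j : H →L[ℂ] H) ζ‖} := by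
    intro j hj
    have hpos : 0 < ‖(j : H →L[ℂ] H) ζ‖ := norm_pos_iff.2 hj
    obtain ⟨n, hn⟩ := exists_nat_one_div_lt hpos
    exact Set.mem_iUnion.2 ⟨n, le_of_lt hn⟩
  refine Set.Countable.mono hsub (Set.countable_iUnion fun n => Set.Finite.countable ?_)
  by_contra hinf
  rw [← Set.not_infinite, not_not] at hinf
  set ε : ℝ := 1 / ((n : ℝ) + 1) with hε
  have hεpos : 0 < ε := by positivity
  set B : ℕ := Nat.ceil (‖ζ‖ ^ 2 / ε ^ 2) with hB
  obtain ⟨t, ht, htcard⟩ := hinf.exists_subset_card_eq (B + 1)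
  set F : Finset (H →L[ℂ] H) := t.image Subtype.val with hF'
  have hFcard : F.card = B + 1 := by
    rw [hF', Finset.card_image_of_injective t Subtype.val_injective, htcard]
  have hmemP : ∀ p ∈ F, p ∈ P := by
    intro p hp
    obtain ⟨j, _, rfl⟩ := Finset.mem_image.1 hp
    exact j.2
  have hsum : ∑ p ∈ F, ‖p ζ‖ ^ 2 ≤ ‖ζ‖ ^ 2 :=
    bessel_sum F (fun p hp => hP p (hmemP p hp))
      (fun p hp q hq hne => hPo (hmemP p hp) (hmemP q hq) hne) ζ
  have hlower : ∀ p ∈ F, ε ^ 2 ≤ ‖p ζ‖ ^ 2 := by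
    intro p hp
    obtain ⟨j, hjt, rfl⟩ := Finset.mem_image.1 hp
    have := ht hjt
    exact pow_le_pow_left₀ (le_of_lt hεpos) this 2
  have hcard : (F.card : ℝ) * ε ^ 2 ≤ ‖ζ‖ ^ 2 := by
    calc (F.card : ℝ) * ε ^ 2 = ∑ _p ∈ F, ε ^ 2 := by
          rw [Finset.sum_const, nsmul_eq_mul]
      _ ≤ ∑ p ∈ F, ‖p ζ‖ ^ 2 := Finset.sum_le_sum hlower
      _ ≤ ‖ζ‖ ^ 2 := hsum
  have hB1 : ((B : ℝ) + 1) ≤ ‖ζ‖ ^ 2 / ε ^ 2 := by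
    rw [le_div_iff₀ (by positivity)]
    rw [hFcard] at hcard
    push_cast at hcard ⊢
    linarith
  have hB2 : ‖ζ‖ ^ 2 / ε ^ 2 ≤ (B : ℝ) := Nat.le_ceil _
  linarith


lemma gen_spec (M : VonNeumannAlgebra H) :
    gen M ≠ 0 ∧ ∃ S : Set (H →L[ℂ] H), Generates M S ∧ Cardinal.mk S ≤ gen M := by
  have hne : {κ : Cardinal.{u} | κ ≠ 0 ∧
      ∃ S : Set (H →L[ℂ] H), Generates M S ∧ Cardinal.mk S ≤ κ}.Nonempty := by
    refine ⟨max 1 (Cardinal.mk (M : Set (H →L[ℂ] H))), ?_, (M : Set (H →L[ℂ] H)), ?_, ?_⟩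
    · intro h
      have : (1 : Cardinal) ≤ max 1 (Cardinal.mk (M : Set (H →L[ℂ] H))) := le_max_left _ _
      rw [h] at this
      exact absurd this (by simp)
    · exact ⟨subset_rfl, fun N hN => hN⟩
    · exact le_max_right _ _
  exact csInf_mem hne

/-- The heart of the argument: a large orthogonal family of projections in a generated
von Neumann algebra yields an equally large orthogonal family of central projections. -/
lemma core (M : VonNeumannAlgebra H) {S : Set (H →L[ℂ] H)} (hgen : Generates M S)
    (hScard : Cardinal.mk S ≤ gen M) (hgen0 : gen M ≠ 0)
    (P : Set (H →L[ℂ] H)) (hP : ∀ p ∈ P, IsProjectionIn M p ∧ p ≠ 0)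
    (hPo : P.Pairwise fun p q => p * q = 0)
    (hbig : Cardinal.aleph0 * gen M < Cardinal.mk P) :
    Cardinal.mk P ≤ decZ M := by
  set ν : Cardinal.{u} := Cardinal.aleph0 * gen M with hν
  have hνinf : Cardinal.aleph0 ≤ ν := by
    conv_lhs => rw [← mul_one Cardinal.aleph0]
    exact mul_le_mul_right (Cardinal.one_le_iff_ne_zero.2 hgen0) _
  -- witness vectors
  have hξex : ∀ j : ↥P, ∃ w : H, (j : H →L[ℂ] H) w ≠ 0 := by
    intro j
    by_contra hcon
    push_neg at hcon
    exact (hP _ j.2).2 (ContinuousLinearMap.ext fun w => by simpa using hcon w)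
  choose wv hwv using hξex
  set ξ : ↥P → H := fun j => (j : H →L[ℂ] H) (wv j) with hξdef
  have hξ0 : ∀ j, ξ j ≠ 0 := hwv
  have hpξ : ∀ j : ↥P, (j : H →L[ℂ] H) (ξ j) = ξ j := by
    intro j
    have hidem : (j : H →L[ℂ] H) * (j : H →L[ℂ] H) = (j : H →L[ℂ] H) := (hP _ j.2).1.2.1
    calc (j : H →L[ℂ] H) (ξ j) = ((j : H →L[ℂ] H) * (j : H →L[ℂ] H)) (wv j) := rfl
      _ = ξ j := by rw [hidem]
  -- the generating alphabet and words
  set T : Set (H →L[ℂ] H) := S ∪ (star '' S) with hT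
  have hTstar : ∀ t ∈ T, star t ∈ T := by
    rintro t (ht | ⟨s, hs, rfl⟩)
    · exact Or.inr ⟨t, ht, rfl⟩
    · exact Or.inl (by simpa using hs)
  have hTM : T ⊆ (M : Set (H →L[ℂ] H)) := by
    rintro t (ht | ⟨s, hs, rfl⟩)
    · exact hgen.1 ht
    · exact star_mem (hgen.1 hs)
  have hMgen : (M : Set (H →L[ℂ] H)) ⊆ (genVN T : Set (H →L[ℂ] H)) :=
    hgen.2 (genVN T) (fun s hs => subset_genVN T (Or.inl hs))
  set Wd : Set (H →L[ℂ] H) :=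
    {x | ∃ l : List (H →L[ℂ] H), (∀ a ∈ l, a ∈ T) ∧ x = l.prod} with hWd
  have hWd1 : (1 : H →L[ℂ] H) ∈ Wd := ⟨[], by simp, by simp⟩
  have hWdmul : ∀ t ∈ T, ∀ x ∈ Wd, t * x ∈ Wd := by
    rintro t ht x ⟨l, hl, rfl⟩
    exact ⟨t :: l, by
      constructor
      · intro a ha
        rcases List.mem_cons.1 ha with rfl | ha
        · exact ht
        · exact hl a ha
      · simp⟩
  -- orbit subspaces for words
  set Worb : ↥P → Set H := fun k => (fun x : H →L[ℂ] H => x (ξ k)) '' Wd with hWorb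
  have hξWorb : ∀ k, ξ k ∈ Worb k := fun k => ⟨1, hWd1, by simp⟩
  have hWorbInv : ∀ k, ∀ t ∈ T, ∀ v ∈ cspan (Worb k), t v ∈ cspan (Worb k) := by
    intro k t ht
    apply cspan_invariant
    rintro _ ⟨x, hx, rfl⟩
    exact Submodule.subset_span ⟨t * x, hWdmul t ht x hx, rfl⟩
  -- every element of M maps ξ k into the closed word-orbit of ξ k
  have horbmem : ∀ k : ↥P, ∀ g ∈ (M : Set (H →L[ℂ] H)), g (ξ k) ∈ cspan (Worb k) := by
    intro k g hg
    set e : H →L[ℂ] H := orth (Worb k) with he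
    have hcomm : ∀ t ∈ T, t * e = e * t := by
      intro t ht
      exact orth_comm (hWorbInv k t ht) (hWorbInv k (star t) (hTstar t ht))
    have hge : e * g = g * e :=
      genVN_commute (hMgen hg) (fun t ht => hcomm t ht)
        (fun t ht => hcomm (star t) (hTstar t ht))
    have hξmem : ξ k ∈ cspan (Worb k) := subset_cspan _ (hξWorb k)
    have : g (ξ k) = e (g (ξ k)) := by
      conv_lhs => rw [← orth_eq_self _ hξmem]
      calc g (orth (Worb k) (ξ k)) = (g * e) (ξ k) := rfl
        _ = (e * g) (ξ k) := by rw [hge]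
        _ = e (g (ξ k)) := rfl
    rw [this]
    exact orth_apply_mem _ _
  -- the central subspaces and projections
  set U : ↥P → Set H := fun j =>
    {y | ∃ c ∈ Set.centralizer (M : Set (H →L[ℂ] H)),
      ∃ m ∈ (M : Set (H →L[ℂ] H)), y = (c * m) (ξ j)} with hU
  set z : ↥P → (H →L[ℂ] H) := fun j => orth (U j) with hz
  have hstarC : ∀ c ∈ Set.centralizer (M : Set (H →L[ℂ] H)),
      star c ∈ Set.centralizer (M : Set (H →L[ℂ] H)) := by
    intro c hc m hm
    have h1 : star m * c = c * star m := hc (star m) (star_mem hm)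
    calc m * star c = star (c * star m) := by simp
      _ = star (star m * c) := by rw [h1]
      _ = star c * m := by simp
  have hξU : ∀ j, ξ j ∈ U j := by
    intro j
    refine ⟨1, ?_, 1, one_mem M, by simp⟩
    intro m _
    simp
  have hUinvM : ∀ j, ∀ t ∈ (M : Set (H →L[ℂ] H)), ∀ v ∈ cspan (U j), t v ∈ cspan (U j) := by
    intro j t ht
    apply cspan_invariant
    rintro _ ⟨c, hc, m, hm, rfl⟩
    refine Submodule.subset_span ⟨c, hc, t * m, mul_mem ht hm, ?_⟩
    have hct : t * c = c * t := hc t ht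
    calc t ((c * m) (ξ j)) = (t * (c * m)) (ξ j) := rfl
      _ = (c * (t * m)) (ξ j) := by rw [← mul_assoc, hct, mul_assoc]
  have hUinvC : ∀ j, ∀ t ∈ Set.centralizer (M : Set (H →L[ℂ] H)),
      ∀ v ∈ cspan (U j), t v ∈ cspan (U j) := by
    intro j t ht
    apply cspan_invariant
    rintro _ ⟨c, hc, m, hm, rfl⟩
    refine Submodule.subset_span ⟨t * c, Set.mul_mem_centralizer ht hc, m, hm, ?_⟩
    calc t ((c * m) (ξ j)) = (t * (c * m)) (ξ j) := rfl
      _ = ((t * c) * m) (ξ j) := by rw [mul_assoc]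
  have hzcommM : ∀ j, ∀ t ∈ (M : Set (H →L[ℂ] H)), t * z j = z j * t := by
    intro j t ht
    exact orth_comm (hUinvM j t ht) (hUinvM j (star t) (star_mem ht))
  have hzcommC : ∀ j, ∀ t ∈ Set.centralizer (M : Set (H →L[ℂ] H)), t * z j = z j * t := by
    intro j t ht
    exact orth_comm (hUinvC j t ht) (hUinvC j (star t) (hstarC t ht))
  have hzM : ∀ j, z j ∈ (M : Set (H →L[ℂ] H)) := by
    intro j
    have : z j ∈ Set.centralizer (Set.centralizer (M : Set (H →L[ℂ] H))) := by
      intro c hc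
      exact hzcommC j c hc
    rwa [M.centralizer_centralizer] at this
  have hzcenter : ∀ j, z j ∈ center M := by
    intro j
    exact ⟨hzM j, fun y hy => (hzcommM j y hy).symm⟩
  have hzstar : ∀ j, star (z j) = z j := fun j => star_orth _
  have hzidem : ∀ j, z j * z j = z j := fun j => orth_mul_orth _
  have hz0 : ∀ j, z j ≠ 0 := fun j =>
    orth_ne_zero _ (subset_cspan _ (hξU j)) (hξ0 j)
  -- the main orthogonality lemma
  have hmain : ∀ j k : ↥P, (∀ x ∈ Wd, (j : H →L[ℂ] H) (x (ξ k)) = 0) → z j * z k = 0 := by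
    intro j k hjk
    -- j kills the whole of M applied to ξ k
    have hkill : ∀ g ∈ (M : Set (H →L[ℂ] H)), (j : H →L[ℂ] H) (g (ξ k)) = 0 := by
      intro g hg
      refine eq_zero_on_cspan ?_ _ (horbmem k g hg)
      rintro _ ⟨x, hx, rfl⟩
      exact hjk x hx
    -- generators of U k are orthogonal to generators of U j
    have hgens : ∀ u' ∈ U k, ∀ u ∈ U j, (inner ℂ u' u : ℂ) = 0 := by
      rintro _ ⟨c, hc, m, hm, rfl⟩ _ ⟨c', hc', n, hn, rfl⟩
      have hstep1 : (inner ℂ ((c * m) (ξ k)) ((c' * n) (ξ j)) : ℂ)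
          = inner ℂ ((star (c' * n) * (c * m)) (ξ k)) (ξ j) := by
        have := ContinuousLinearMap.adjoint_inner_right (star (c' * n)) ((c * m) (ξ k)) (ξ j)
        rw [← ContinuousLinearMap.star_eq_adjoint, star_star] at this
        exact this
      set c₁ : H →L[ℂ] H := star c' * c with hc₁def
      have hc₁ : c₁ ∈ Set.centralizer (M : Set (H →L[ℂ] H)) :=
        Set.mul_mem_centralizer (hstarC c' hc') hc
      set g : H →L[ℂ] H := star n * m with hgdef
      have hgM : g ∈ (M : Set (H →L[ℂ] H)) := mul_mem (star_mem hn) hm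
      have hop : star (c' * n) * (c * m) = c₁ * g := by
        have hcomm : star n * c₁ = c₁ * star n := hc₁ (star n) (star_mem hn)
        calc star (c' * n) * (c * m) = (star n * star c') * (c * m) := by
              rw [star_mul]
          _ = star n * (star c' * c) * m := by rw [mul_assoc, mul_assoc, mul_assoc]
          _ = (star n * c₁) * m := by rw [hc₁def, mul_assoc]
          _ = (c₁ * star n) * m := by rw [hcomm]
          _ = c₁ * g := by rw [hgdef, mul_assoc]
      rw [hstep1, hop]
      have hstep2 : (inner ℂ ((c₁ * g) (ξ k)) (ξ j) : ℂ)
          = inner ℂ ((c₁ * g) (ξ k)) ((j : H →L[ℂ] H) (ξ j)) := by rw [hpξ j]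
      rw [hstep2]
      have hstarj : star (j : H →L[ℂ] H) = (j : H →L[ℂ] H) := (hP _ j.2).1.2.2
      have hstep3 : (inner ℂ ((c₁ * g) (ξ k)) ((j : H →L[ℂ] H) (ξ j)) : ℂ)
          = inner ℂ ((j : H →L[ℂ] H) ((c₁ * g) (ξ k))) (ξ j) := by
        have := ContinuousLinearMap.adjoint_inner_right ((j : H →L[ℂ] H))
          ((c₁ * g) (ξ k)) (ξ j)
        rw [← ContinuousLinearMap.star_eq_adjoint, hstarj] at this
        rw [← this]
      rw [hstep3]
      have hzero : (j : H →L[ℂ] H) ((c₁ * g) (ξ k)) = 0 := by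
        have hjc : (j : H →L[ℂ] H) * c₁ = c₁ * (j : H →L[ℂ] H) := hc₁ _ (hP _ j.2).1.1
        calc (j : H →L[ℂ] H) ((c₁ * g) (ξ k))
            = (((j : H →L[ℂ] H) * c₁) * g) (ξ k) := by rw [mul_assoc]; rfl
          _ = ((c₁ * (j : H →L[ℂ] H)) * g) (ξ k) := by rw [hjc]
          _ = c₁ ((j : H →L[ℂ] H) (g (ξ k))) := by rw [mul_assoc]; rfl
          _ = c₁ 0 := by rw [hkill g hgM]
          _ = 0 := by simp
      rw [hzero, inner_zero_left]
    -- hence the closed spans are orthogonal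
    have horthsub : cspan (U k) ≤ (cspan (U j))ᗮ := by
      refine Submodule.topologicalClosure_minimal _ ?_ (Submodule.isClosed_orthogonal _)
      rw [Submodule.span_le]
      intro u' hu'
      rw [SetLike.mem_coe, Submodule.mem_orthogonal']
      intro u hu
      have : (innerSL ℂ u') u = 0 := by
        refine eq_zero_on_cspan ?_ u hu
        intro y hy
        rw [innerSL_apply_apply]
        exact hgens u' hu' y hy
      rwa [innerSL_apply_apply] at this
    ext v
    have h1 : z k v ∈ (cspan (U j))ᗮ := horthsub (orth_apply_mem _ _)
    show z j (z k v) = (0 : H →L[ℂ] H) v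
    rw [orth_eq_zero _ h1]
    simp
  -- neighborhoods and their size
  set NB : ↥P → Set ↥P := fun d => {j | ∃ x ∈ Wd, (j : H →L[ℂ] H) (x (ξ d)) ≠ 0} with hNB
  have hlift : ∀ l : List (H →L[ℂ] H), (∀ a ∈ l, a ∈ T) →
      ∃ l' : List ↥T, l'.map Subtype.val = l := by
    intro l
    induction l with
    | nil => exact fun _ => ⟨[], rfl⟩
    | cons a l ih =>
      intro h
      obtain ⟨l', hl'⟩ := ih (fun b hb => h b (List.mem_cons_of_mem a hb))
      exact ⟨⟨a, h a (List.mem_cons_self)⟩ :: l', by simp [hl']⟩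
  have hNcard : ∀ d, Cardinal.mk (NB d) ≤ ν := by
    intro d
    have hsub : NB d ⊆ ⋃ l : List ↥T,
        {j : ↥P | (j : H →L[ℂ] H) ((l.map Subtype.val).prod (ξ d)) ≠ 0} := by
      rintro j ⟨x, ⟨l, hl, rfl⟩, hx⟩
      obtain ⟨l', rfl⟩ := hlift l hl
      exact Set.mem_iUnion.2 ⟨l', hx⟩
    refine le_trans (Cardinal.mk_le_mk_of_subset hsub) ?_
    refine le_trans (Cardinal.mk_iUnion_le _) ?_
    have hcnt : ∀ l : List ↥T,
        Cardinal.mk {j : ↥P | (j : H →L[ℂ] H) ((l.map Subtype.val).prod (ξ d)) ≠ 0}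
          ≤ Cardinal.aleph0 := by
      intro l
      rw [Cardinal.mk_le_aleph0_iff, Set.countable_coe_iff]
      exact bessel_countable P (fun p hp => ⟨(hP p hp).1.2.1, (hP p hp).1.2.2⟩) hPo _
    have hlistcard : Cardinal.mk (List ↥T) ≤ ν := by
      refine le_trans (Cardinal.mk_list_le_max _) ?_
      refine max_le hνinf ?_
      have h1 : Cardinal.mk ↥T ≤ Cardinal.mk ↥S + Cardinal.mk ↥S := by
        refine le_trans (Cardinal.mk_union_le _ _) ?_
        exact add_le_add le_rfl Cardinal.mk_image_le
      have h2 : Cardinal.mk ↥S ≤ ν := by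
        refine le_trans hScard ?_
        conv_lhs => rw [← one_mul (gen M)]
        exact mul_le_mul_left (le_of_lt Cardinal.one_lt_aleph0) _
      refine le_trans h1 ?_
      refine le_trans (add_le_add h2 h2) ?_
      exact le_of_eq (Cardinal.add_eq_self hνinf)
    calc Cardinal.mk (List ↥T) * ⨆ l : List ↥T,
          Cardinal.mk {j : ↥P | (j : H →L[ℂ] H) ((l.map Subtype.val).prod (ξ d)) ≠ 0}
        ≤ ν * Cardinal.aleph0 := mul_le_mul' hlistcard (ciSup_le' hcnt)
      _ ≤ ν * ν := mul_le_mul' le_rfl hνinf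
      _ = ν := Cardinal.mul_eq_self hνinf
  -- Zorn: a maximal pairwise-orthogonal subfamily
  have hchainub : ∀ c ⊆ {D : Set ↥P | D.Pairwise fun a b => z a * z b = 0},
      IsChain (· ⊆ ·) c → ∃ ub ∈ {D : Set ↥P | D.Pairwise fun a b => z a * z b = 0},
        ∀ s ∈ c, s ⊆ ub := by
    intro c hc hchain
    refine ⟨⋃₀ c, ?_, fun s hs => Set.subset_sUnion_of_mem hs⟩
    intro a ha b hb hab
    obtain ⟨s, hs, has⟩ := ha
    obtain ⟨t', ht', hbt⟩ := hb
    rcases hchain.total hs ht' with h | h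
    · exact hc ht' (h has) hbt hab
    · exact hc hs has (h hbt) hab
  obtain ⟨D, hD⟩ := zorn_subset {D : Set ↥P | D.Pairwise fun a b => z a * z b = 0} hchainub
  have hDpair : D.Pairwise fun a b => z a * z b = 0 := hD.1
  -- covering
  have hcover : ∀ j : ↥P, j ∈ D ∨ ∃ d ∈ D, j ∈ NB d := by
    intro j
    by_cases hjD : j ∈ D
    · exact Or.inl hjD
    right
    have hnot : ¬ (insert j D).Pairwise fun a b => z a * z b = 0 := by
      intro hins
      have : insert j D ⊆ D := hD.2 hins (Set.subset_insert j D)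
      exact hjD (this (Set.mem_insert j D))
    rw [Set.Pairwise] at hnot
    push_neg at hnot
    obtain ⟨a, ha, b, hb, hab, hzab⟩ := hnot
    rcases Set.mem_insert_iff.1 ha with rfl | haD
    · rcases Set.mem_insert_iff.1 hb with rfl | hbD
      · exact absurd rfl hab
      · refine ⟨b, hbD, ?_⟩
        by_contra hcon
        rw [hNB, Set.mem_setOf_eq] at hcon
        push_neg at hcon
        exact hzab (hmain a b hcon)
    · rcases Set.mem_insert_iff.1 hb with rfl | hbD
      · refine ⟨a, haD, ?_⟩
        by_contra hcon
        rw [hNB, Set.mem_setOf_eq] at hcon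
        push_neg at hcon
        have : z b * z a = 0 := hmain b a hcon
        have : z a * z b = 0 := by
          have hst : star (z b * z a) = z a * z b := by
            rw [star_mul, hzstar, hzstar]
          rw [← hst, this, star_zero]
        exact hzab this
      · exact absurd (hDpair haD hbD hab) hzab
  -- cardinality count
  have hcard1 : Cardinal.mk ↥P ≤ Cardinal.mk ↥D + Cardinal.mk ↥D * ν := by
    have huniv : (Set.univ : Set ↥P) ⊆ D ∪ ⋃ d ∈ D, NB d := by
      intro j _
      rcases hcover j with h | ⟨d, hd, hj⟩
      · exact Or.inl h
      · exact Or.inr (Set.mem_biUnion hd hj)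
    calc Cardinal.mk ↥P = Cardinal.mk ↥(Set.univ : Set ↥P) := Cardinal.mk_univ.symm
      _ ≤ Cardinal.mk ↥(D ∪ ⋃ d ∈ D, NB d) := Cardinal.mk_le_mk_of_subset huniv
      _ ≤ Cardinal.mk ↥D + Cardinal.mk ↥(⋃ d ∈ D, NB d) := Cardinal.mk_union_le _ _
      _ ≤ Cardinal.mk ↥D + Cardinal.mk ↥D * ν := by
          refine add_le_add le_rfl ?_
          refine le_trans (Cardinal.mk_biUnion_le _ _) ?_
          exact mul_le_mul' le_rfl (ciSup_le' fun d => hNcard d.1)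
  have hDbig : Cardinal.mk ↥P ≤ Cardinal.mk ↥D := by
    by_cases hcase : Cardinal.mk ↥D ≤ ν
    · exfalso
      have : Cardinal.mk ↥P ≤ ν := by
        refine le_trans hcard1 ?_
        calc Cardinal.mk ↥D + Cardinal.mk ↥D * ν ≤ ν + ν * ν :=
              add_le_add hcase (mul_le_mul' hcase le_rfl)
          _ = ν + ν := by rw [Cardinal.mul_eq_self hνinf]
          _ = ν := Cardinal.add_eq_self hνinf
      exact absurd (lt_of_lt_of_le hbig this) (lt_irrefl _)
    · push_neg at hcase
      have hDinf : Cardinal.aleph0 ≤ Cardinal.mk ↥D := le_trans hνinf (le_of_lt hcase)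
      have hmul : Cardinal.mk ↥D * ν = Cardinal.mk ↥D := by
        rw [Cardinal.mul_eq_max hDinf hνinf]
        exact max_eq_left (le_of_lt hcase)
      refine le_trans hcard1 ?_
      rw [hmul, Cardinal.add_eq_self hDinf]
  -- the image family of central projections
  set Q : Set (H →L[ℂ] H) := z '' D with hQ
  have hzinj : Set.InjOn z D := by
    intro a ha b hb hzab
    by_contra hne
    have h0 : z a * z b = 0 := hDpair ha hb hne
    rw [← hzab, hzidem a] at h0
    exact hz0 a h0
  have hQcard : Cardinal.mk ↥Q = Cardinal.mk ↥D := Cardinal.mk_image_eq_of_injOn z D hzinj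
  have hQvalid : (∀ p ∈ Q, p ∈ center M ∧ p * p = p ∧ star p = p ∧ p ≠ 0) ∧
      Q.Pairwise fun p q => p * q = 0 := by
    constructor
    · rintro _ ⟨d, hd, rfl⟩
      exact ⟨hzcenter d, hzidem d, hzstar d, hz0 d⟩
    · rintro _ ⟨d, hd, rfl⟩ _ ⟨d', hd', rfl⟩ hne
      have hdd' : d ≠ d' := fun h => hne (by rw [h])
      exact hDpair hd hd' hdd'
  have hbdd : BddAbove (Set.range fun P : {P : Set (H →L[ℂ] H) //
      (∀ p ∈ P, p ∈ center M ∧ p * p = p ∧ star p = p ∧ p ≠ 0) ∧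
        P.Pairwise fun p q => p * q = 0} => Cardinal.mk P.1) := by
    refine ⟨Cardinal.mk (H →L[ℂ] H), ?_⟩
    rintro x ⟨A, rfl⟩
    exact Cardinal.mk_set_le _
  have hle : Cardinal.mk ↥Q ≤ decZ M := le_ciSup hbdd ⟨Q, hQvalid⟩
  calc Cardinal.mk ↥P ≤ Cardinal.mk ↥D := hDbig
    _ = Cardinal.mk ↥Q := hQcard.symm
    _ ≤ decZ M := hle

/-- if `dec M > ℵ₀ · gen M` then `dec M = dec (Z(M))`. -/
theorem stmt_13 (M : VonNeumannAlgebra H)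
    (h : Cardinal.aleph0 * gen M < dec M) : dec M = decZ M := by
  obtain ⟨hgen0, S, hSgen, hScard⟩ := gen_spec M
  have hbdd_dec : BddAbove (Set.range fun P : {P : Set (H →L[ℂ] H) //
      (∀ p ∈ P, IsProjectionIn M p ∧ p ≠ 0) ∧ P.Pairwise fun p q => p * q = 0} =>
        Cardinal.mk P.1) := by
    refine ⟨Cardinal.mk (H →L[ℂ] H), ?_⟩
    rintro x ⟨A, rfl⟩
    exact Cardinal.mk_set_le _
  have hZle : decZ M ≤ dec M := by
    refine ciSup_le' ?_
    rintro ⟨Q, hQ1, hQ2⟩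
    have hvalid : (∀ p ∈ Q, IsProjectionIn M p ∧ p ≠ 0) ∧
        Q.Pairwise fun p q => p * q = 0 := by
      refine ⟨fun p hp => ?_, hQ2⟩
      obtain ⟨hpc, hpp, hps, hp0⟩ := hQ1 p hp
      exact ⟨⟨hpc.1, hpp, hps⟩, hp0⟩
    exact le_ciSup hbdd_dec ⟨Q, hvalid⟩
  refine le_antisymm ?_ hZle
  by_contra hlt'
  have hZlt : decZ M < dec M := lt_of_not_ge hlt'
  set c : Cardinal.{u} := max (Cardinal.aleph0 * gen M) (decZ M) with hc
  have hcdec : c < dec M := max_lt h hZlt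
  have hex : ∃ P : {P : Set (H →L[ℂ] H) //
      (∀ p ∈ P, IsProjectionIn M p ∧ p ≠ 0) ∧ P.Pairwise fun p q => p * q = 0},
      c < Cardinal.mk P.1 := by
    by_contra hcon
    push_neg at hcon
    exact absurd (lt_of_lt_of_le hcdec (ciSup_le' hcon)) (lt_irrefl _)
  obtain ⟨⟨P, hP1, hP2⟩, hPc⟩ := hex
  have hbig : Cardinal.aleph0 * gen M < Cardinal.mk P :=
    lt_of_le_of_lt (le_max_left _ _) hPc
  have hcore : Cardinal.mk P ≤ decZ M := core M hSgen hScard hgen0 P hP1 hP2 hbig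
  exact absurd (lt_of_le_of_lt (le_trans hcore (le_max_right _ _)) hPc) (lt_irrefl _)

end VNPaper
end
end

section
/- For every von Neumann algebra M on a complex Hilbert space, the cardinality |M| of the underlying set of M satisfies |M| ≤ (ℵ₀ · gen(M))^{ℵ₀ · dec(M)}. -/
noncomputable section

open scoped ENNReal

universe u

namespace VNPaper

variable {H : Type u} [NormedAddCommGroup H] [InnerProductSpace ℂ H] [CompleteSpace H]

open Cardinal
open scoped ComplexInnerProductSpace

-- Cardinality helpers --------------------------------------------------

/-- cardinality of a topological closure in a (complete) metric-ish space -/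
theorem mk_closure_le {X : Type u} [MetricSpace X] (s : Set X) :
    #(closure s) ≤ #s ^ Cardinal.aleph0.{u} := by
  classical
  by_cases hs : s = ∅
  · subst hs; simp
  let f : (ULift.{u} ℕ → s) → X := fun v =>
    if h : ∃ x : X, Filter.Tendsto (fun n : ℕ => ((v (ULift.up n) : X))) Filter.atTop (nhds x)
    then h.choose else (Classical.choice (Set.nonempty_iff_ne_empty.2 hs).to_subtype : s)
  have hsub : closure s ⊆ Set.range f := by
    intro x hx
    obtain ⟨v, hv, hvx⟩ := mem_closure_iff_seq_limit.1 hx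
    refine ⟨fun n => ⟨v n.down, hv n.down⟩, ?_⟩
    have h : ∃ y : X, Filter.Tendsto (fun n : ℕ => v n) Filter.atTop (nhds y) := ⟨x, hvx⟩
    simp only [f, dif_pos h]
    exact tendsto_nhds_unique h.choose_spec hvx
  calc #(closure s) ≤ #(Set.range f) := mk_le_mk_of_subset hsub
    _ ≤ #(ULift.{u} ℕ → s) := mk_range_le
    _ = #s ^ Cardinal.aleph0.{u} := by
        rw [← Cardinal.power_def, Cardinal.mk_uLift, Cardinal.mk_nat, Cardinal.lift_aleph0]

theorem mk_span_le {X : Type u} [NormedAddCommGroup X] [Module ℂ X] (s : Set X) :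
    #(Submodule.span ℂ s : Set X) ≤ max Cardinal.aleph0.{u} (Cardinal.continuum.{u} * #s) := by
  classical
  let f : List (ℂ × s) → X := fun l => (l.map fun p => p.1 • (p.2 : X)).sum
  have hsub : (Submodule.span ℂ s : Set X) ⊆ Set.range f := by
    intro x hx
    induction hx using Submodule.span_induction with
    | mem x hx => exact ⟨[(1, ⟨x, hx⟩)], by simp [f]⟩
    | zero => exact ⟨[], by simp [f]⟩
    | add x y _ _ hx hy =>
        obtain ⟨l₁, rfl⟩ := hx; obtain ⟨l₂, rfl⟩ := hy
        exact ⟨l₁ ++ l₂, by simp [f]⟩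
    | smul c x _ hx =>
        obtain ⟨l, rfl⟩ := hx
        refine ⟨l.map fun p => (c * p.1, p.2), ?_⟩
        rw [List.smul_sum, List.map_map]
        simp [f, Function.comp_def, mul_smul]
  calc #(Submodule.span ℂ s : Set X) ≤ #(Set.range f) := mk_le_mk_of_subset hsub
    _ ≤ #(List (ℂ × s)) := mk_range_le
    _ ≤ max Cardinal.aleph0.{u} #(ℂ × s) := Cardinal.mk_list_le_max _
    _ ≤ _ := by
        apply max_le_max le_rfl
        rw [Cardinal.mk_prod, Cardinal.mk_complex, Cardinal.lift_continuum, Cardinal.lift_id']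

theorem mk_submonoid_closure_le {X : Type u} [Monoid X] (s : Set X) :
    #(Submonoid.closure s : Set X) ≤ max Cardinal.aleph0.{u} #s := by
  classical
  let f : List s → X := fun l => (l.map Subtype.val).prod
  have hsub : (Submonoid.closure s : Set X) ⊆ Set.range f := by
    intro x hx
    obtain ⟨l, hl, rfl⟩ := Submonoid.exists_list_of_mem_closure hx
    refine ⟨l.attach.map fun y => ⟨y.1, hl y.1 y.2⟩, ?_⟩
    show (List.map Subtype.val (l.attach.map _)).prod = l.prod
    rw [List.map_map]
    exact congrArg List.prod ((List.attach_map_val (l := l) (f := id)).trans (List.map_id l))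
  calc #(Submonoid.closure s : Set X) ≤ #(Set.range f) := mk_le_mk_of_subset hsub
    _ ≤ #(List s) := mk_range_le
    _ ≤ max Cardinal.aleph0.{u} #s := Cardinal.mk_list_le_max _


-- Projection helpers ---------------------------------------------------


/-- The orthogonal projection onto `K` as an endomorphism of `H`. -/
def projCLM (K : Submodule ℂ H) [K.HasOrthogonalProjection] : H →L[ℂ] H :=
  K.subtypeL ∘L K.orthogonalProjectionOnto

theorem projCLM_mem (K : Submodule ℂ H) [K.HasOrthogonalProjection] (v : H) :
    projCLM K v ∈ K := (K.orthogonalProjectionOnto v).2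

theorem projCLM_of_mem {K : Submodule ℂ H} [K.HasOrthogonalProjection] {v : H} (hv : v ∈ K) :
    projCLM K v = v := by
  have := Submodule.orthogonalProjectionOnto_mem_subspace_eq_self (K := K) ⟨v, hv⟩
  simpa [projCLM] using congrArg Subtype.val this

theorem projCLM_of_mem_orthogonal {K : Submodule ℂ H} [K.HasOrthogonalProjection] {v : H}
    (hv : v ∈ Kᗮ) : projCLM K v = 0 := by
  have := Submodule.orthogonalProjectionOnto_apply_of_mem_orthogonal (K := K) hv
  simpa [projCLM] using congrArg Subtype.val this

theorem projCLM_idem (K : Submodule ℂ H) [K.HasOrthogonalProjection] :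
    projCLM K * projCLM K = projCLM K := by
  ext v
  exact projCLM_of_mem (projCLM_mem K v)

theorem projCLM_star (K : Submodule ℂ H) [K.HasOrthogonalProjection] [CompleteSpace K] :
    star (projCLM K) = projCLM K :=
  isSelfAdjoint_starProjection K

/-- a star-closed-invariance commutation lemma -/
theorem projCLM_comm {K : Submodule ℂ H} [K.HasOrthogonalProjection] {a : H →L[ℂ] H}
    (h1 : ∀ v ∈ K, a v ∈ K) (h2 : ∀ v ∈ K, (star a) v ∈ K) :
    a * projCLM K = projCLM K * a := by
  ext v
  have hdec : a v = a (projCLM K v) + a (v - projCLM K v) := by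
    rw [← map_add]; congr 1; abel
  have hmemo : a (v - projCLM K v) ∈ Kᗮ := by
    rw [Submodule.mem_orthogonal]
    intro u hu
    have h3 : v - projCLM K v ∈ Kᗮ := K.sub_starProjection_mem_orthogonal v
    have h4 : (ContinuousLinearMap.adjoint a) u ∈ K := by
      rw [← ContinuousLinearMap.star_eq_adjoint]; exact h2 u hu
    calc (⟪u, a (v - projCLM K v)⟫)
        = ⟪(ContinuousLinearMap.adjoint a) u, v - projCLM K v⟫ :=
          (ContinuousLinearMap.adjoint_inner_left a _ _).symm
      _ = 0 := (Submodule.mem_orthogonal _ _).1 h3 _ h4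
  have : projCLM K (a v) = a (projCLM K v) := by
    rw [hdec, map_add, projCLM_of_mem (h1 _ (projCLM_mem K v)), projCLM_of_mem_orthogonal hmemo,
      add_zero]
  simpa [ContinuousLinearMap.mul_apply] using this.symm


instance (K : Submodule ℂ H) : CompleteSpace K.topologicalClosure :=
  (Submodule.isClosed_topologicalClosure K).completeSpace_coe

theorem closSpan_invariant {s : Set H} {a : H →L[ℂ] H}
    (h : ∀ v ∈ s, a v ∈ Submodule.span ℂ s) :
    ∀ v ∈ (Submodule.span ℂ s).topologicalClosure, a v ∈ (Submodule.span ℂ s).topologicalClosure := by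
  have hsp : ∀ v ∈ Submodule.span ℂ s, a v ∈ Submodule.span ℂ s := by
    intro v hv
    have : Submodule.map (a : H →ₗ[ℂ] H) (Submodule.span ℂ s) ≤ Submodule.span ℂ s := by
      rw [Submodule.map_span]
      exact Submodule.span_le.2 (by rintro _ ⟨w, hw, rfl⟩; exact h w hw)
    exact this ⟨v, hv, rfl⟩
  intro v hv
  have hv' : v ∈ closure ((Submodule.span ℂ s : Set H)) := by
    rwa [← Submodule.topologicalClosure_coe]
  have : a v ∈ closure (a '' (Submodule.span ℂ s : Set H)) :=
    image_closure_subset_closure_image a.continuous ⟨v, hv', rfl⟩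
  have : a v ∈ closure ((Submodule.span ℂ s : Set H)) :=
    closure_mono (by rintro _ ⟨w, hw, rfl⟩; exact hsp w hw) this
  rwa [← Submodule.topologicalClosure_coe] at this

/-- The double centralizer of a set, as a von Neumann algebra. -/
def bicomm (T : Set (H →L[ℂ] H)) : VonNeumannAlgebra H where
  toStarSubalgebra := StarSubalgebra.centralizer ℂ
    ((StarSubalgebra.centralizer ℂ T : StarSubalgebra ℂ (H →L[ℂ] H)) : Set (H →L[ℂ] H))
  centralizer_centralizer' := by
    show Set.centralizer (Set.centralizer ((StarSubalgebra.centralizer ℂ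
      ((StarSubalgebra.centralizer ℂ T : StarSubalgebra ℂ (H →L[ℂ] H)) : Set (H →L[ℂ] H))) :
        Set (H →L[ℂ] H))) = ((StarSubalgebra.centralizer ℂ
      ((StarSubalgebra.centralizer ℂ T : StarSubalgebra ℂ (H →L[ℂ] H)) : Set (H →L[ℂ] H))) :
        Set (H →L[ℂ] H))
    rw [StarSubalgebra.coe_centralizer_centralizer]
    exact Set.centralizer_centralizer_centralizer _

theorem subset_bicomm (T : Set (H →L[ℂ] H)) : T ⊆ (bicomm T : Set (H →L[ℂ] H)) := by
  intro x hx
  show x ∈ StarSubalgebra.centralizer ℂ _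
  rw [StarSubalgebra.mem_centralizer_iff]
  intro g hg
  have hg' : g ∈ StarSubalgebra.centralizer ℂ T := hg
  rw [StarSubalgebra.mem_centralizer_iff] at hg'
  obtain ⟨h1, h2⟩ := hg' x hx
  constructor
  · exact h1.symm
  · -- star g ∈ centralizer T as well
    have : star g ∈ StarSubalgebra.centralizer ℂ T := star_mem hg
    rw [StarSubalgebra.mem_centralizer_iff] at this
    exact (this x hx).1.symm

theorem bicomm_comm {T : Set (H →L[ℂ] H)} {x p : H →L[ℂ] H}
    (hx : x ∈ bicomm T) (hp : ∀ m ∈ T, m * p = p * m)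
    (hp' : ∀ m ∈ T, star m * p = p * star m) : p * x = x * p := by
  have hx' : x ∈ StarSubalgebra.centralizer ℂ
      ((StarSubalgebra.centralizer ℂ T : StarSubalgebra ℂ (H →L[ℂ] H)) : Set (H →L[ℂ] H)) := hx
  rw [StarSubalgebra.mem_centralizer_iff] at hx'
  have hpmem : p ∈ StarSubalgebra.centralizer ℂ T := by
    rw [StarSubalgebra.mem_centralizer_iff]
    exact fun g hg => ⟨hp g hg, hp' g hg⟩
  exact (hx' p hpmem).1



/-- `|M| ≤ (ℵ₀ · gen M) ^ (ℵ₀ · dec M)`. -/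
theorem stmt_19 (M : VonNeumannAlgebra H) :
    Cardinal.mk (M : Set (H →L[ℂ] H)) ≤
      (Cardinal.aleph0 * gen M) ^ (Cardinal.aleph0 * dec M) := by
  classical
  -- Step A : a generating set of the right size
  have hgenmem : gen M ∈ {κ : Cardinal.{u} | κ ≠ 0 ∧
      ∃ S : Set (H →L[ℂ] H), Generates M S ∧ Cardinal.mk S ≤ κ} := by
    apply csInf_mem
    refine ⟨max (Cardinal.mk (M : Set (H →L[ℂ] H))) 1, ?_, (M : Set (H →L[ℂ] H)),
      ⟨subset_rfl, fun N hN => hN⟩, le_max_left _ _⟩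
    exact (lt_of_lt_of_le zero_lt_one (le_max_right _ _)).ne'
  obtain ⟨hgen0, S, hSgen, hScard⟩ := hgenmem
  set g : Cardinal.{u} := Cardinal.aleph0 * gen M with hg
  have hag : Cardinal.aleph0.{u} ≤ g := by
    conv_lhs => rw [← mul_one Cardinal.aleph0.{u}]
    exact mul_le_mul_right (Cardinal.one_le_iff_ne_zero.2 hgen0) _
  have hg0 : g ≠ 0 := by
    intro h
    exact Cardinal.aleph0_ne_zero (le_antisymm (hag.trans_eq h) (Cardinal.zero_le _))
  have hgea : g ^ Cardinal.aleph0.{u} ≥ Cardinal.aleph0.{u} := by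
    calc Cardinal.aleph0.{u} ≤ g := hag
      _ = g ^ (1 : Cardinal) := (Cardinal.power_one g).symm
      _ ≤ g ^ Cardinal.aleph0.{u} := Cardinal.power_le_power_left hg0 Cardinal.one_le_aleph0
  -- Step B : monoid generated by S ∪ star '' S
  set T : Set (H →L[ℂ] H) := S ∪ (star '' S) with hT
  have hTstar : ∀ t ∈ T, star t ∈ T := by
    rintro t (ht | ⟨w, hw, rfl⟩)
    · exact Or.inr ⟨t, ht, rfl⟩
    · rw [star_star]; exact Or.inl hw
  set A : Submonoid (H →L[ℂ] H) := Submonoid.closure T with hA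
  have hAstar : ∀ a ∈ A, star a ∈ A := by
    intro a ha
    induction ha using Submonoid.closure_induction with
    | mem t ht => exact Submonoid.subset_closure (hTstar t ht)
    | one => rw [star_one]; exact one_mem A
    | mul x y _ _ hx hy => rw [star_mul]; exact mul_mem hy hx
  have hAcard : Cardinal.mk (A : Set (H →L[ℂ] H)) ≤ g := by
    refine (mk_submonoid_closure_le T).trans (max_le hag ?_)
    calc Cardinal.mk T ≤ Cardinal.mk S + Cardinal.mk (star '' S) := Cardinal.mk_union_le _ _
      _ ≤ gen M + gen M := add_le_add (hScard) (Cardinal.mk_image_le.trans hScard)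
      _ ≤ g + g := by
          have hgeng : gen M ≤ g := by
            conv_lhs => rw [← one_mul (gen M)]
            exact mul_le_mul_left (Cardinal.one_le_aleph0) _
          exact add_le_add hgeng hgeng
      _ ≤ g := by rw [Cardinal.add_eq_self hag]
  -- Step C/D : maximal family of vectors with orthogonal commutant-orbits
  set Comm : Set (H →L[ℂ] H) := (M.commutant : Set (H →L[ℂ] H)) with hComm
  set R : H → H → Prop := fun ξ ζ => ∀ a ∈ Comm, ∀ b ∈ Comm, (⟪a ξ, b ζ⟫ : ℂ) = 0 with hR
  have hRsymm : Symmetric R := by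
    intro ξ ζ h a ha b hb
    rw [← inner_conj_symm, h b hb a ha, map_zero]
  set Good : Set (Set H) := {V | (∀ ξ ∈ V, ξ ≠ (0 : H)) ∧ V.Pairwise R} with hGood
  obtain ⟨V, hVmax⟩ : ∃ V, Maximal (· ∈ Good) V := by
    apply zorn_subset
    intro c hc hchain
    refine ⟨⋃₀ c, ⟨?_, ?_⟩, fun s hs => Set.subset_sUnion_of_mem hs⟩
    · rintro ξ ⟨s, hs, hξ⟩
      exact (hc hs).1 ξ hξ
    · rintro ξ ⟨s, hs, hξ⟩ ζ ⟨t, ht, hζ⟩ hne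
      rcases hchain.total hs ht with hst | hts
      · exact (hc ht).2 (hst hξ) hζ hne
      · exact (hc hs).2 hξ (hts hζ) hne
  have hVGood : V ∈ Good := hVmax.1
  -- orbits and their closed spans
  set orb : H → Set H := fun ξ => (fun a : H →L[ℂ] H => a ξ) '' Comm with horb
  set Ko : H → Submodule ℂ H := fun ξ => (Submodule.span ℂ (orb ξ)).topologicalClosure with hKo
  set e : H → (H →L[ℂ] H) := fun ξ => projCLM (Ko ξ) with he
  have hKoInv : ∀ a ∈ M.commutant, ∀ ξ : H, ∀ v ∈ Ko ξ, a v ∈ Ko ξ := by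
    intro a ha ξ
    apply closSpan_invariant
    rintro _ ⟨b, hb, rfl⟩
    exact Submodule.subset_span ⟨a * b, mul_mem ha hb, rfl⟩
  have hecomm : ∀ ξ : H, ∀ a ∈ M.commutant, a * e ξ = e ξ * a := by
    intro ξ a ha
    exact projCLM_comm (hKoInv a ha ξ) (hKoInv (star a) (star_mem ha) ξ)
  have hemem : ∀ ξ : H, e ξ ∈ M := by
    intro ξ
    rw [← VonNeumannAlgebra.commutant_commutant M]
    exact VonNeumannAlgebra.mem_commutant_iff.2 (fun a ha => hecomm ξ a ha)
  have hξKo : ∀ ξ : H, ξ ∈ Ko ξ := by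
    intro ξ
    apply (Submodule.span ℂ (orb ξ)).le_topologicalClosure
    exact Submodule.subset_span ⟨1, one_mem M.commutant, ContinuousLinearMap.one_apply ξ⟩
  have hene : ∀ ξ ∈ V, e ξ ≠ 0 := by
    intro ξ hξ h0
    refine hVGood.1 ξ hξ ?_
    have := projCLM_of_mem (hξKo ξ)
    rw [show projCLM (Ko ξ) = e ξ from rfl, h0] at this
    simpa using this.symm
  have heorth : ∀ ξ ∈ V, ∀ ζ ∈ V, ξ ≠ ζ → e ξ * e ζ = 0 := by
    intro ξ hξ ζ hζ hne
    have hKle : Ko ζ ≤ (Ko ξ)ᗮ := by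
      refine Submodule.topologicalClosure_minimal _ ?_ (Submodule.isClosed_orthogonal _)
      apply Submodule.span_le.2
      rintro _ ⟨b, hb, rfl⟩
      rw [SetLike.mem_coe, Submodule.mem_orthogonal']
      intro u hu
      have hker : Ko ξ ≤ LinearMap.ker ((innerSL ℂ (b ζ) : H →L[ℂ] ℂ) : H →ₗ[ℂ] ℂ) := by
        refine Submodule.topologicalClosure_minimal _ ?_ (ContinuousLinearMap.isClosed_ker _)
        apply Submodule.span_le.2
        rintro _ ⟨a, ha, rfl⟩
        rw [SetLike.mem_coe, LinearMap.mem_ker]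
        exact hVGood.2 hζ hξ hne.symm b hb a ha
      exact hker hu
    ext v
    have : e ζ v ∈ (Ko ξ)ᗮ := hKle (projCLM_mem _ v)
    simp only [ContinuousLinearMap.mul_apply, ContinuousLinearMap.zero_apply]
    exact projCLM_of_mem_orthogonal this
  -- Step : #V ≤ dec M
  have hVdec : Cardinal.mk V ≤ dec M := by
    set eV : V → (H →L[ℂ] H) := fun ξ => e ξ.1 with heV
    have heinj : Function.Injective eV := by
      intro ξ ζ hEq
      by_contra hne
      have hne' : ξ.1 ≠ ζ.1 := fun h => hne (Subtype.ext h)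
      have h0 : e ξ.1 * e ζ.1 = 0 := heorth _ ξ.2 _ ζ.2 hne'
      have hEq' : e ξ.1 = e ζ.1 := hEq
      rw [hEq'] at h0
      rw [projCLM_idem] at h0
      exact hene _ ζ.2 h0
    have hprops : (∀ p ∈ Set.range eV, IsProjectionIn M p ∧ p ≠ 0) ∧
        (Set.range eV).Pairwise fun p q => p * q = 0 := by
      constructor
      · rintro _ ⟨ξ, rfl⟩
        exact ⟨⟨hemem ξ.1, projCLM_idem _, projCLM_star _⟩, hene _ ξ.2⟩
      · rintro _ ⟨ξ, rfl⟩ _ ⟨ζ, rfl⟩ hne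
        exact heorth _ ξ.2 _ ζ.2 (fun h => hne (by rw [heV, Subtype.ext h]))
    have hbdd : BddAbove (Set.range fun P : {P : Set (H →L[ℂ] H) //
        (∀ p ∈ P, IsProjectionIn M p ∧ p ≠ 0) ∧ P.Pairwise fun p q => p * q = 0} =>
        Cardinal.mk P.1) := by
      refine ⟨Cardinal.mk (H →L[ℂ] H), ?_⟩
      rintro c ⟨P, rfl⟩
      exact Cardinal.mk_set_le _
    have := le_ciSup hbdd (⟨Set.range eV, hprops⟩ : {P : Set (H →L[ℂ] H) //
        (∀ p ∈ P, IsProjectionIn M p ∧ p ≠ 0) ∧ P.Pairwise fun p q => p * q = 0})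
    rw [← Cardinal.mk_range_eq eV heinj]
    exact this
  -- Step G : density of the union of commutant orbits over V
  set bigU : Set H := ⋃ ξ ∈ V, orb ξ with hbigU
  set W : Submodule ℂ H := (Submodule.span ℂ bigU).topologicalClosure with hW
  have hbigUW : bigU ⊆ (W : Set H) :=
    fun u hu => (Submodule.span ℂ bigU).le_topologicalClosure (Submodule.subset_span hu)
  have hdense : W = ⊤ := by
    rw [← Submodule.orthogonal_eq_bot_iff]
    rw [Submodule.eq_bot_iff]
    intro ζ hζ
    by_contra hζ0
    have hζW : ∀ u ∈ W, (⟪ζ, u⟫ : ℂ) = 0 := (Submodule.mem_orthogonal' _ _).1 hζ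
    have hζnotV : ζ ∉ V := by
      intro hζV
      refine hζ0 ((inner_self_eq_zero (𝕜 := ℂ)).1 ?_)
      refine hζW ζ (hbigUW ?_)
      exact Set.mem_biUnion hζV ⟨1, one_mem M.commutant, ContinuousLinearMap.one_apply ζ⟩
    have hgood' : insert ζ V ∈ Good := by
      constructor
      · rintro ξ (rfl | hξ)
        · exact hζ0
        · exact hVGood.1 ξ hξ
      · rw [haveI : Std.Symm R := ⟨fun _ _ h => hRsymm h⟩; Set.pairwise_insert_of_symm]
        refine ⟨hVGood.2, ?_⟩
        intro ξ hξ _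
        intro a ha b hb
        have hmem : (star a * b) ξ ∈ (W : Set H) :=
          hbigUW (Set.mem_biUnion hξ ⟨star a * b, mul_mem (star_mem ha) hb, rfl⟩)
        have h2 : (⟪ζ, (star a * b) ξ⟫ : ℂ) = 0 := hζW _ hmem
        have h3 : (⟪a ζ, b ξ⟫ : ℂ) = (⟪ζ, (star a * b) ξ⟫ : ℂ) := by
          rw [ContinuousLinearMap.mul_apply, ContinuousLinearMap.star_eq_adjoint,
            ContinuousLinearMap.adjoint_inner_right]
        rw [h3, h2]
    have : insert ζ V ⊆ V := hVmax.2 hgood' (Set.subset_insert ζ V)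
    exact hζnotV (this (Set.mem_insert ζ V))
  -- Step H : each x ∈ M maps each ξ into the closed span of the A-orbit of ξ
  set orbA : H → Set H := fun ξ => (fun a : H →L[ℂ] H => a ξ) '' (A : Set (H →L[ℂ] H)) with horbA
  set La : H → Submodule ℂ H := fun ξ => (Submodule.span ℂ (orbA ξ)).topologicalClosure with hLa
  set N : VonNeumannAlgebra H := bicomm S with hN
  have hMN : (M : Set (H →L[ℂ] H)) ⊆ (N : Set (H →L[ℂ] H)) := hSgen.2 N (subset_bicomm S)
  have hxmem : ∀ x ∈ M, ∀ ξ : H, x ξ ∈ La ξ := by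
    intro x hx ξ
    set p : H →L[ℂ] H := projCLM (La ξ) with hp
    have hLaInv : ∀ t ∈ A, ∀ v ∈ La ξ, t v ∈ La ξ := by
      intro t ht
      apply closSpan_invariant
      rintro _ ⟨a, ha, rfl⟩
      exact Submodule.subset_span ⟨t * a, mul_mem ht ha, rfl⟩
    have hpcomm : ∀ t ∈ T, t * p = p * t := by
      intro t ht
      exact projCLM_comm (hLaInv t (Submonoid.subset_closure ht))
        (hLaInv (star t) (Submonoid.subset_closure (hTstar t ht)))
    have hpx : p * x = x * p := by
      refine bicomm_comm (hMN hx) ?_ ?_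
      · intro m hm; exact hpcomm m (Or.inl hm)
      · intro m hm; exact hpcomm (star m) (hTstar m (Or.inl hm))
    have hξLa : ξ ∈ La ξ := by
      apply (Submodule.span ℂ (orbA ξ)).le_topologicalClosure
      exact Submodule.subset_span ⟨1, one_mem A, ContinuousLinearMap.one_apply ξ⟩
    have hx2 : x ξ = p (x ξ) := calc
      x ξ = x (p ξ) := by rw [projCLM_of_mem hξLa]
      _ = (x * p) ξ := rfl
      _ = (p * x) ξ := by rw [hpx]
      _ = p (x ξ) := rfl
    rw [hx2]
    exact projCLM_mem _ _
  -- Step : injection of M into the product of the La ξ, ξ ∈ V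
  set Φ : ↥(M : Set (H →L[ℂ] H)) → (Π ξ : ↥V, ↥(La ξ.1 : Set H)) :=
    fun x ξ => ⟨x.1 ξ.1, hxmem x.1 x.2 ξ.1⟩ with hΦ
  have hΦinj : Function.Injective Φ := by
    intro x y hxy
    have hcomp : ∀ ξ : V, x.1 ξ.1 = y.1 ξ.1 := by
      intro ξ
      exact congrArg Subtype.val (congrFun hxy ξ)
    set z : H →L[ℂ] H := x.1 - y.1 with hz
    have hzM : z ∈ M := sub_mem x.2 y.2
    have hzc : ∀ a ∈ M.commutant, a * z = z * a := by
      have hzM' : z ∈ M.commutant.commutant := by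
        rw [VonNeumannAlgebra.commutant_commutant]; exact hzM
      exact fun a ha => VonNeumannAlgebra.mem_commutant_iff.1 hzM' a ha
    have hker : W ≤ LinearMap.ker (z : H →ₗ[ℂ] H) := by
      refine Submodule.topologicalClosure_minimal _ ?_ (ContinuousLinearMap.isClosed_ker _)
      apply Submodule.span_le.2
      rintro _ hu
      rw [hbigU] at hu
      rw [Set.mem_iUnion₂] at hu
      obtain ⟨ξ, hξ, b, hb, rfl⟩ := hu
      rw [SetLike.mem_coe, LinearMap.mem_ker]
      have h1 : z (b ξ) = b (z ξ) := by
        have := hzc b hb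
        calc z (b ξ) = (z * b) ξ := rfl
          _ = (b * z) ξ := by rw [← this]
          _ = b (z ξ) := rfl
      show z (b ξ) = 0; rw [h1]
      have : z ξ = 0 := by
        rw [hz]
        rw [ContinuousLinearMap.sub_apply, hcomp ⟨ξ, hξ⟩, sub_self]
      rw [this, map_zero]
    have hz0 : z = 0 := by
      ext v
      have : v ∈ LinearMap.ker (z : H →ₗ[ℂ] H) := hker (hdense ▸ Submodule.mem_top)
      simpa using this
    have : x.1 = y.1 := by
      have := sub_eq_zero.1 hz0
      exact this
    exact Subtype.ext this
  -- Step I : cardinal arithmetic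
  have hLabound : ∀ ξ : H, Cardinal.mk (La ξ : Set H) ≤ g ^ Cardinal.aleph0.{u} := by
    intro ξ
    have h1 : Cardinal.mk (orbA ξ) ≤ g := Cardinal.mk_image_le.trans hAcard
    have h2 : Cardinal.mk (Submodule.span ℂ (orbA ξ) : Set H) ≤ g ^ Cardinal.aleph0.{u} := by
      refine (mk_span_le (orbA ξ)).trans (max_le (hgea) ?_)
      calc Cardinal.continuum.{u} * Cardinal.mk (orbA ξ)
          ≤ (g ^ Cardinal.aleph0.{u}) * (g ^ Cardinal.aleph0.{u}) := by
            apply mul_le_mul'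
            · rw [← Cardinal.two_power_aleph0]
              exact Cardinal.power_le_power_right ((Cardinal.nat_lt_aleph0 2).le.trans hag)
            · exact h1.trans ((Cardinal.power_one g).symm.trans_le
                (Cardinal.power_le_power_left hg0 Cardinal.one_le_aleph0))
        _ = g ^ Cardinal.aleph0.{u} := by
            rw [← Cardinal.power_add, Cardinal.aleph0_add_aleph0]
    have h3 : Cardinal.mk (La ξ : Set H) ≤
        (Cardinal.mk (Submodule.span ℂ (orbA ξ) : Set H)) ^ Cardinal.aleph0.{u} := by
      have : (La ξ : Set H) = closure ((Submodule.span ℂ (orbA ξ) : Set H)) :=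
        Submodule.topologicalClosure_coe _
      rw [this]
      exact mk_closure_le _
    refine h3.trans ?_
    calc (Cardinal.mk (Submodule.span ℂ (orbA ξ) : Set H)) ^ Cardinal.aleph0.{u}
        ≤ (g ^ Cardinal.aleph0.{u}) ^ Cardinal.aleph0.{u} :=
          Cardinal.power_le_power_right h2
      _ = g ^ Cardinal.aleph0.{u} := by
          rw [← Cardinal.power_mul, Cardinal.aleph0_mul_aleph0]
  calc Cardinal.mk (M : Set (H →L[ℂ] H))
      ≤ Cardinal.mk (Π ξ : ↥V, ↥(La ξ.1 : Set H)) := Cardinal.mk_le_of_injective hΦinj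
    _ = Cardinal.prod (fun ξ : V => Cardinal.mk (La ξ.1 : Set H)) := Cardinal.mk_pi _
    _ ≤ Cardinal.prod (fun _ : V => g ^ Cardinal.aleph0.{u}) :=
        Cardinal.prod_le_prod _ _ (fun ξ => hLabound ξ.1)
    _ = (g ^ Cardinal.aleph0.{u}) ^ Cardinal.mk V := Cardinal.prod_const' _ _
    _ = g ^ (Cardinal.aleph0.{u} * Cardinal.mk V) := (Cardinal.power_mul).symm
    _ ≤ g ^ (Cardinal.aleph0.{u} * dec M) :=
        Cardinal.power_le_power_left hg0 (mul_le_mul_right hVdec _)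

end VNPaper
end
end
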